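/- arXiv:2003.01759 — 4 statements merged into one kernel-verified Lean document; each statement's English description precedes it below -/
import Mathlib

section
/- Let x* be a locally optimal solution of the problem (P) at which RCQ holds. Then the penalty function Φ_c is locally exact at x*, that is, there exists c* ≥ 0 such that x* is a point of local minimum of Φ_c on A for every c ≥ c*. Furthermore, in this case the first order growth condition for (P) holds at x* if and only if Φ_c satisfies the first order growth condition on A at x* for some c ≥ 0. -/
open Set Filter Topology Pointwise
open scoped RealInnerProductSpace

noncomputable section

/-- The contingent (Bouligand tangent) cone to a set `C` at a point `x`. -/
def contingentCone {X : Type*} [NormedAddCommGroup X] [NormedSpace ℝ X]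
    (C : Set X) (x : X) : Set X :=
  {h | ∃ (a : ℕ → ℝ) (v : ℕ → X), (∀ n, 0 < a n) ∧
    Tendsto a atTop (𝓝 0) ∧ Tendsto v atTop (𝓝 h) ∧ ∀ n, x + a n • v n ∈ C}

/-- Robinson's constraint qualification at a feasible point `x`. -/
def RobinsonCQ {d : ℕ} {Y : Type*} [NormedAddCommGroup Y] [NormedSpace ℝ Y]
    (G : EuclideanSpace ℝ (Fin d) → Y) (K : Set Y)
    (A : Set (EuclideanSpace ℝ (Fin d))) (x : EuclideanSpace ℝ (Fin d)) : Prop :=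
  (0 : Y) ∈ interior {y | ∃ a ∈ A, ∃ k ∈ K, y = G x + fderiv ℝ G x (a - x) - k}

variable {d : ℕ} {W : Type*} [TopologicalSpace W]
variable {Y : Type*} [NormedAddCommGroup Y] [NormedSpace ℝ Y]

/-- `F(x) = max_{ω ∈ W} f(x, ω)` (as a supremum). -/
def Fmax (f : EuclideanSpace ℝ (Fin d) → W → ℝ) (x : EuclideanSpace ℝ (Fin d)) : ℝ :=
  sSup (range fun ω => f x ω)

/-- `W(x) = {ω ∈ W | f(x, ω) = F(x)}`, the set of active indices. -/
def activeSet (f : EuclideanSpace ℝ (Fin d) → W → ℝ) (x : EuclideanSpace ℝ (Fin d)) : Set W :=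
  {ω | f x ω = Fmax f x}

/-- The set of active gradients `{∇ₓ f(x, ω) | ω ∈ W(x)}`. -/
def activeGrads (f : EuclideanSpace ℝ (Fin d) → W → ℝ) (x : EuclideanSpace ℝ (Fin d)) :
    Set (EuclideanSpace ℝ (Fin d)) :=
  (fun ω => gradient (fun z => f z ω) x) '' activeSet f x

/-- The directional derivative `F'(x, h) = max_{ω ∈ W(x)} ⟨∇ₓ f(x, ω), h⟩` of the max-function. -/
def Fdir (f : EuclideanSpace ℝ (Fin d) → W → ℝ) (x h : EuclideanSpace ℝ (Fin d)) : ℝ :=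
  sSup ((fun v => ⟪v, h⟫) '' activeGrads f x)

/-- The Hadamard subdifferential `∂F(x) = co {∇ₓ f(x, ω) | ω ∈ W(x)}` of the max-function. -/
def subdiffF (f : EuclideanSpace ℝ (Fin d) → W → ℝ) (x : EuclideanSpace ℝ (Fin d)) :
    Set (EuclideanSpace ℝ (Fin d)) :=
  convexHull ℝ (activeGrads f x)

/-- The polar cone of a set in `ℝ^d`. -/
def polarCone {d : ℕ} (C : Set (EuclideanSpace ℝ (Fin d))) : Set (EuclideanSpace ℝ (Fin d)) :=
  {v | ∀ h ∈ C, ⟪v, h⟫ ≤ 0}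

/-- The normal cone `N_A(x)` to `A` at `x`, i.e. the polar of the contingent cone. -/
def normalCone {d : ℕ} (A : Set (EuclideanSpace ℝ (Fin d))) (x : EuclideanSpace ℝ (Fin d)) :
    Set (EuclideanSpace ℝ (Fin d)) :=
  polarCone (contingentCone A x)

/-- The polar cone `K* = {y* | ⟨y*, y⟩ ≤ 0 ∀ y ∈ K}` of `K ⊆ Y` in the dual space. -/
def dualPolar (K : Set Y) : Set (Y →L[ℝ] ℝ) :=
  {l | ∀ y ∈ K, l y ≤ 0}

/-- The cone `𝒩(x) = [DG(x)]*(K* ∩ lin(G(x))^⊥)`. -/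
def calN (G : EuclideanSpace ℝ (Fin d) → Y) (K : Set Y) (x : EuclideanSpace ℝ (Fin d)) :
    Set (EuclideanSpace ℝ (Fin d)) :=
  {v | ∃ l : Y →L[ℝ] ℝ, l ∈ dualPolar K ∧ l (G x) = 0 ∧
    ∀ u : EuclideanSpace ℝ (Fin d), ⟪v, u⟫ = l (fderiv ℝ G x u)}

/-- `λ` is a Lagrange multiplier of problem (P) at a feasible point `x`:
`λ ∈ K*`, `⟨λ, G(x)⟩ = 0` and `[L(·,λ)]'(x, h) ≥ 0` for all `h ∈ T_A(x)`, where the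
directional derivative of the Lagrangian equals `F'(x,h) + ⟨λ, DG(x) h⟩`. -/
def IsLagrangeMult (f : EuclideanSpace ℝ (Fin d) → W → ℝ) (G : EuclideanSpace ℝ (Fin d) → Y)
    (K : Set Y) (A : Set (EuclideanSpace ℝ (Fin d))) (x : EuclideanSpace ℝ (Fin d))
    (l : Y →L[ℝ] ℝ) : Prop :=
  l ∈ dualPolar K ∧ l (G x) = 0 ∧
    ∀ h ∈ contingentCone A x, 0 ≤ Fdir f x h + l (fderiv ℝ G x h)

/-- The subdifferential `∂φ(x)` of the distance penalty term `φ(x) = dist(G(x), K)` at a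
feasible point: `{[DG(x)]* y* | ‖y*‖ ≤ 1, ⟨y*, y − G(x)⟩ ≤ 0 ∀ y ∈ K}`. -/
def subdiffPhi (G : EuclideanSpace ℝ (Fin d) → Y) (K : Set Y) (x : EuclideanSpace ℝ (Fin d)) :
    Set (EuclideanSpace ℝ (Fin d)) :=
  {v | ∃ l : Y →L[ℝ] ℝ, ‖l‖ ≤ 1 ∧ (∀ y ∈ K, l (y - G x) ≤ 0) ∧
    ∀ u : EuclideanSpace ℝ (Fin d), ⟪v, u⟫ = l (fderiv ℝ G x u)}

/-- The penalty function `Φ_c(x) = F(x) + c · dist(G(x), K)`. -/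
def penaltyFn (f : EuclideanSpace ℝ (Fin d) → W → ℝ) (G : EuclideanSpace ℝ (Fin d) → Y)
    (K : Set Y) (c : ℝ) (x : EuclideanSpace ℝ (Fin d)) : ℝ :=
  Fmax f x + c * Metric.infDist (G x) K

section AuxPenalty

set_option maxHeartbeats 1000000 in
theorem robinson_open {E Y : Type*} [NormedAddCommGroup E] [NormedSpace ℝ E] [CompleteSpace E]
    [NormedAddCommGroup Y] [NormedSpace ℝ Y] [CompleteSpace Y]
    {A : Set E} {K : Set Y} (hAcl : IsClosed A) (hAconv : Convex ℝ A)
    (hKcl : IsClosed K) (hKconv : Convex ℝ K)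
    {xs : E} (hxA : xs ∈ A) {b : Y} (hb : b ∈ K) (L : E →L[ℝ] Y)
    (hR : (0:Y) ∈ interior {y | ∃ a ∈ A, ∃ k ∈ K, y = b + L (a - xs) - k}) :
    ∃ σ > (0:ℝ), ∃ R > (0:ℝ), ∀ y : Y, ‖y‖ ≤ σ →
      ∃ a ∈ A, ∃ k ∈ K, y = b + L (a - xs) - k ∧ ‖a - xs‖ ≤ R := by
  classical
  set D : Set Y := {y | ∃ a ∈ A, ∃ k ∈ K, y = b + L (a - xs) - k} with hD
  obtain ⟨r, hr, hball⟩ : ∃ r > 0, Metric.ball (0:Y) r ⊆ D := by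
    rcases Metric.mem_nhds_iff.1 (mem_interior_iff_mem_nhds.1 hR) with ⟨r, hr, hsub⟩
    exact ⟨r, hr, hsub⟩
  set C : ℕ → Set Y := fun n =>
    {y | ∃ a ∈ A, ∃ k ∈ K, y = b + L (a - xs) - k ∧ ‖a - xs‖ ≤ n ∧ ‖k‖ ≤ n} with hC
  have hCconv : ∀ n, Convex ℝ (C n) := by
    intro n y₁ hy₁ y₂ hy₂ θ₁ θ₂ hθ₁ hθ₂ hθ
    obtain ⟨a₁, ha₁, k₁, hk₁, he₁, hb₁, hb₁'⟩ := hy₁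
    obtain ⟨a₂, ha₂, k₂, hk₂, he₂, hb₂, hb₂'⟩ := hy₂
    have hθ₂' : θ₂ = 1 - θ₁ := by linarith
    subst hθ₂'
    have hs : θ₁ • a₁ + (1 - θ₁) • a₂ - xs = θ₁ • (a₁ - xs) + (1 - θ₁) • (a₂ - xs) := by
      module
    refine ⟨θ₁ • a₁ + (1 - θ₁) • a₂, hAconv ha₁ ha₂ hθ₁ hθ₂ hθ,
      θ₁ • k₁ + (1 - θ₁) • k₂, hKconv hk₁ hk₂ hθ₁ hθ₂ hθ, ?_, ?_, ?_⟩
    · rw [he₁, he₂, hs, map_add, map_smul, map_smul]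
      module
    · rw [hs]
      calc ‖θ₁ • (a₁ - xs) + (1 - θ₁) • (a₂ - xs)‖
          ≤ ‖θ₁ • (a₁ - xs)‖ + ‖(1 - θ₁) • (a₂ - xs)‖ := norm_add_le _ _
        _ ≤ θ₁ * n + (1 - θ₁) * n := by
            rw [norm_smul, norm_smul, Real.norm_of_nonneg hθ₁, Real.norm_of_nonneg hθ₂]
            gcongr
        _ = n := by ring
    · calc ‖θ₁ • k₁ + (1 - θ₁) • k₂‖ ≤ ‖θ₁ • k₁‖ + ‖(1 - θ₁) • k₂‖ := norm_add_le _ _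
        _ ≤ θ₁ * n + (1 - θ₁) * n := by
            rw [norm_smul, norm_smul, Real.norm_of_nonneg hθ₁, Real.norm_of_nonneg hθ₂]
            gcongr
        _ = n := by ring
  have hCmono : ∀ {m n : ℕ}, m ≤ n → C m ⊆ C n := by
    intro m n hmn y ⟨a, ha, k, hk, he, h1, h2⟩
    exact ⟨a, ha, k, hk, he, h1.trans (by exact_mod_cast Nat.cast_le.2 hmn),
      h2.trans (by exact_mod_cast Nat.cast_le.2 hmn)⟩
  have hDC : D ⊆ ⋃ n, C n := by
    rintro y ⟨a, ha, k, hk, he⟩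
    obtain ⟨n, hn⟩ := exists_nat_ge (max ‖a - xs‖ ‖k‖)
    exact mem_iUnion.2 ⟨n, a, ha, k, hk, he, (le_max_left _ _).trans hn,
      (le_max_right _ _).trans hn⟩
  -- Baire
  have hbaire : ∃ n, (interior (closure (C n))).Nonempty := by
    by_contra h
    push_neg at h
    have hm : IsMeagre (⋃ n, closure (C n)) := by
      refine isMeagre_iUnion fun n => ?_
      have hcl : IsClosed (closure (C n)) := isClosed_closure
      have hdense : Dense (closure (C n))ᶜ := interior_eq_empty_iff_dense_compl.mp (h n)
      exact residual_of_dense_open hcl.isOpen_compl hdense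
    have hmb : IsMeagre (Metric.ball (0:Y) r) :=
      hm.mono ((Metric.ball_subset_ball le_rfl).trans
        (hball.trans (hDC.trans (iUnion_mono fun n => subset_closure))))
    have hd : Dense (Metric.ball (0:Y) r)ᶜ := dense_of_mem_residual hmb
    obtain ⟨x, hx1, hx2⟩ := hd.exists_mem_open Metric.isOpen_ball ⟨0, Metric.mem_ball_self hr⟩
    exact hx1 hx2
  obtain ⟨N, y₀, hy₀⟩ := hbaire
  obtain ⟨s, hs, hballs⟩ : ∃ s > 0, Metric.ball y₀ s ⊆ closure (C N) := by
    rcases Metric.isOpen_iff.1 isOpen_interior y₀ hy₀ with ⟨s, hs, hsub⟩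
    exact ⟨s, hs, hsub.trans interior_subset⟩
  set lam : ℝ := r / (2 * (‖y₀‖ + 1)) with hlam
  have hy₀1 : (0:ℝ) < ‖y₀‖ + 1 := by positivity
  have hlam0 : 0 < lam := by positivity
  have hmem : (-lam) • y₀ ∈ D := by
    apply hball
    rw [mem_ball_zero_iff, norm_smul]
    have h1 : ‖(-lam : ℝ)‖ = lam := by rw [norm_neg, Real.norm_of_nonneg hlam0.le]
    rw [h1]
    have h2 : lam * (‖y₀‖ + 1) = r / 2 := by
      rw [hlam]; field_simp
    nlinarith [hlam0, hr]
  obtain ⟨aM, haM, kM, hkM, heM⟩ := hmem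
  obtain ⟨M, hM⟩ := exists_nat_ge (max ‖aM - xs‖ ‖kM‖)
  set P : ℕ := max N M with hP
  have hPmem : (-lam) • y₀ ∈ C P := by
    have hMP : (M:ℝ) ≤ (P:ℝ) := by exact_mod_cast Nat.cast_le.2 (le_max_right N M)
    exact ⟨aM, haM, kM, hkM, heM, ((le_max_left _ _).trans hM).trans hMP,
      ((le_max_right _ _).trans hM).trans hMP⟩
  set t : ℝ := lam / (1 + lam) with htdef
  have h1lam : (0:ℝ) < 1 + lam := by linarith
  have ht0 : 0 < t := by positivity
  have ht1 : t < 1 := by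
    rw [htdef, div_lt_one h1lam]; linarith
  have hrel : t - (1 - t) * lam = 0 := by
    rw [htdef]; field_simp; ring
  have hball2 : Metric.ball (0:Y) (t*s) ⊆ closure (C P) := by
    intro z hz
    have hzn : ‖z‖ < t * s := mem_ball_zero_iff.1 hz
    have hw : y₀ + t⁻¹ • z ∈ Metric.ball y₀ s := by
      rw [Metric.mem_ball, dist_eq_norm]
      have : y₀ + t⁻¹ • z - y₀ = t⁻¹ • z := by abel
      rw [this, norm_smul, Real.norm_of_nonneg (inv_pos.2 ht0).le]
      rw [inv_mul_lt_iff₀ ht0]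
      exact hzn
    have hwc : y₀ + t⁻¹ • z ∈ closure (C P) :=
      closure_mono (hCmono (le_max_left N M)) (hballs hw)
    have hpc : (-lam) • y₀ ∈ closure (C P) := subset_closure hPmem
    have key : (1 - t) • ((-lam) • y₀) + t • (y₀ + t⁻¹ • z) = z := by
      have h2 : t * t⁻¹ = 1 := mul_inv_cancel₀ (ne_of_gt ht0)
      calc (1 - t) • ((-lam) • y₀) + t • (y₀ + t⁻¹ • z)
          = (t - (1 - t) * lam) • y₀ + (t * t⁻¹) • z := by module
        _ = z := by rw [hrel, h2, zero_smul, one_smul, zero_add]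
    rw [← key]
    exact (hCconv P).closure hpc hwc (by linarith) ht0.le (by ring)
  set σ₀ : ℝ := t * s with hσ₀def
  have hσ₀0 : 0 < σ₀ := mul_pos ht0 hs
  refine ⟨σ₀/4, by positivity, (P:ℝ) + 1, by positivity, ?_⟩
  intro y hy
  -- one-step approximation
  have step : ∀ (n : ℕ) (u : Y), ‖u‖ < σ₀ * (2:ℝ)⁻¹ ^ (n+1) →
      ∃ (a : E) (k : Y) (u' : Y), a ∈ A ∧ k ∈ K ∧ ‖a - xs‖ ≤ (P:ℝ) ∧ ‖k‖ ≤ (P:ℝ) ∧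
        u' = u - ((2:ℝ)⁻¹ ^ (n+1)) • (b + L (a - xs) - k) ∧
        ‖u'‖ < σ₀ * (2:ℝ)⁻¹ ^ (n+2) := by
    intro n u hu
    have h2p : (0:ℝ) < (2:ℝ) ^ (n+1) := by positivity
    have hv : ((2:ℝ) ^ (n+1)) • u ∈ Metric.ball (0:Y) σ₀ := by
      rw [mem_ball_zero_iff, norm_smul, Real.norm_of_nonneg h2p.le]
      have : (2:ℝ) ^ (n+1) * (σ₀ * (2:ℝ)⁻¹ ^ (n+1)) = σ₀ := by
        rw [inv_pow]; field_simp
      nlinarith [hu]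
    have hvc := hball2 hv
    rw [Metric.mem_closure_iff] at hvc
    obtain ⟨c, hcC, hcd⟩ := hvc (σ₀/2) (by positivity)
    obtain ⟨a, haA, k, hkK, hce, hbd1, hbd2⟩ := hcC
    refine ⟨a, k, u - ((2:ℝ)⁻¹ ^ (n+1)) • (b + L (a - xs) - k), haA, hkK, hbd1, hbd2, rfl, ?_⟩
    rw [← hce]
    have hrw : u - ((2:ℝ)⁻¹ ^ (n+1)) • c = ((2:ℝ)⁻¹ ^ (n+1)) • (((2:ℝ) ^ (n+1)) • u - c) := by
      rw [smul_sub, smul_smul, ← mul_pow]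
      norm_num
    rw [hrw, norm_smul, Real.norm_of_nonneg (by positivity : (0:ℝ) ≤ (2:ℝ)⁻¹ ^ (n+1))]
    have hdn : ‖((2:ℝ) ^ (n+1)) • u - c‖ < σ₀ / 2 := by
      rw [← dist_eq_norm]; exact hcd
    calc (2:ℝ)⁻¹ ^ (n+1) * ‖((2:ℝ) ^ (n+1)) • u - c‖
        < (2:ℝ)⁻¹ ^ (n+1) * (σ₀ / 2) := by
          apply mul_lt_mul_of_pos_left hdn (by positivity)
      _ = σ₀ * (2:ℝ)⁻¹ ^ (n+2) := by ring
  choose! Fa Fk Fu hFA hFK hFb1 hFb2 hFeq hFlt using step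
  obtain ⟨u, hu0, hustep⟩ : ∃ u : ℕ → Y, u 0 = y ∧ ∀ n, u (n+1) = Fu n (u n) :=
    ⟨fun n => Nat.rec y (fun m um => Fu m um) n, rfl, fun n => rfl⟩
  have huinv : ∀ n, ‖u n‖ < σ₀ * (2:ℝ)⁻¹ ^ (n+1) := by
    intro n
    induction n with
    | zero =>
      rw [hu0]
      calc ‖y‖ ≤ σ₀/4 := hy
        _ < σ₀ * (2:ℝ)⁻¹ ^ (0+1) := by norm_num; linarith
    | succ m ih =>
      rw [hustep m]
      exact hFlt m (u m) ih
  set w : ℕ → ℝ := fun n => (2:ℝ)⁻¹ ^ (n+1) with hwdef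
  have hw0 : ∀ n, 0 < w n := fun n => by positivity
  set a : ℕ → E := fun n => Fa n (u n) with hadef
  set k : ℕ → Y := fun n => Fk n (u n) with hkdef
  have haA : ∀ n, a n ∈ A := fun n => hFA n (u n) (huinv n)
  have hkK : ∀ n, k n ∈ K := fun n => hFK n (u n) (huinv n)
  have hab : ∀ n, ‖a n - xs‖ ≤ (P:ℝ) := fun n => hFb1 n (u n) (huinv n)
  have hkb : ∀ n, ‖k n‖ ≤ (P:ℝ) := fun n => hFb2 n (u n) (huinv n)
  have hPnn : (0:ℝ) ≤ (P:ℝ) := Nat.cast_nonneg P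
  -- telescoping
  have htel : ∀ n, y - ∑ i ∈ Finset.range n, w i • (b + L (a i - xs) - k i) = u n := by
    intro n
    induction n with
    | zero => rw [Finset.range_zero, Finset.sum_empty, sub_zero, hu0]
    | succ m ih =>
      have hFeq' : u (m+1) = u m - w m • (b + L (a m - xs) - k m) := by
        rw [hustep m]; exact hFeq m (u m) (huinv m)
      rw [Finset.sum_range_succ, hFeq', ← ih, sub_add_eq_sub_sub]
  -- geometric sums
  have hWsum : ∀ n, ∑ i ∈ Finset.range n, w i = 1 - (2:ℝ)⁻¹ ^ n := by
    intro n
    induction n with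
    | zero => rw [Finset.range_zero, Finset.sum_empty, pow_zero]; norm_num
    | succ m ih => rw [Finset.sum_range_succ, ih, hwdef]; ring
  have hwsummable : Summable w := by
    have : Summable (fun n : ℕ => (2:ℝ)⁻¹ * (2:ℝ)⁻¹ ^ n) :=
      (summable_geometric_of_lt_one (by norm_num) (by norm_num)).mul_left _
    refine this.congr fun n => ?_
    rw [hwdef]; ring
  have hwtsum : ∑' n, w n = 1 := by
    have h1 : ∑' n : ℕ, (2:ℝ)⁻¹ ^ n = 2 := by
      rw [tsum_geometric_of_lt_one (by norm_num) (by norm_num)]; norm_num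
    have h2 : ∑' n, w n = (2:ℝ)⁻¹ * ∑' n : ℕ, (2:ℝ)⁻¹ ^ n := by
      rw [← tsum_mul_left]
      refine tsum_congr fun n => ?_
      rw [hwdef]; ring
    rw [h2, h1]; norm_num
  -- summability of the three series
  have hsA : Summable (fun n => w n • (a n - xs)) := by
    refine Summable.of_norm_bounded (hwsummable.mul_right (P:ℝ)) fun n => ?_
    rw [norm_smul, Real.norm_of_nonneg (hw0 n).le]
    exact mul_le_mul_of_nonneg_left (hab n) (hw0 n).le
  have hsK : Summable (fun n => w n • k n) := by
    refine Summable.of_norm_bounded (hwsummable.mul_right (P:ℝ)) fun n => ?_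
    rw [norm_smul, Real.norm_of_nonneg (hw0 n).le]
    exact mul_le_mul_of_nonneg_left (hkb n) (hw0 n).le
  have hsb : Summable (fun n => w n • b) := hwsummable.smul_const b
  have hsC : Summable (fun n => w n • (b + L (a n - xs) - k n)) := by
    refine Summable.of_norm_bounded (hwsummable.mul_right (‖b‖ + ‖L‖ * P + P)) fun n => ?_
    rw [norm_smul, Real.norm_of_nonneg (hw0 n).le]
    refine mul_le_mul_of_nonneg_left ?_ (hw0 n).le
    calc ‖b + L (a n - xs) - k n‖ ≤ ‖b + L (a n - xs)‖ + ‖k n‖ := norm_sub_le _ _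
      _ ≤ ‖b‖ + ‖L (a n - xs)‖ + ‖k n‖ := by gcongr; exact norm_add_le _ _
      _ ≤ ‖b‖ + ‖L‖ * (P:ℝ) + (P:ℝ) := by
          gcongr
          · exact (L.le_opNorm _).trans (mul_le_mul_of_nonneg_left (hab n) (norm_nonneg L))
          · exact hkb n
  -- limits
  have hsAn : Summable (fun n => ‖w n • (a n - xs)‖) := by
    refine Summable.of_nonneg_of_le (fun n => norm_nonneg _) (fun n => ?_)
      (hwsummable.mul_right (P:ℝ))
    rw [norm_smul, Real.norm_of_nonneg (hw0 n).le]
    exact mul_le_mul_of_nonneg_left (hab n) (hw0 n).le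
  set aLim : E := xs + ∑' n, w n • (a n - xs) with haLdef
  set kLim : Y := ∑' n, w n • k n with hkLdef
  have hconv_comb : ∀ (n : ℕ) (z : ℕ → E), (∀ i, z i ∈ A) →
      (∑ i ∈ Finset.range n, w i • z i) + ((2:ℝ)⁻¹ ^ n) • xs ∈ A := by
    intro n z hz
    classical
    have := hAconv.sum_mem (t := Finset.range (n+1))
      (w := fun i => if i < n then w i else (2:ℝ)⁻¹ ^ n)
      (z := fun i => if i < n then z i else xs) ?_ ?_ ?_
    · convert this using 1
      rw [Finset.sum_range_succ, if_neg (lt_irrefl n)]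
      congr 1
      · refine (Finset.sum_congr rfl fun i hi => ?_).symm
        rw [if_pos (Finset.mem_range.mp hi), if_pos (Finset.mem_range.mp hi)]
      · rw [if_neg (lt_irrefl n)]
    · intro i _
      by_cases hi : i < n
      · rw [if_pos hi]; exact (hw0 i).le
      · rw [if_neg hi]; positivity
    · rw [Finset.sum_range_succ, if_neg (lt_irrefl n)]
      have : ∑ i ∈ Finset.range n, (if i < n then w i else (2:ℝ)⁻¹ ^ n) =
          ∑ i ∈ Finset.range n, w i :=
        Finset.sum_congr rfl fun i hi => if_pos (Finset.mem_range.mp hi)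
      rw [this, hWsum n]; ring
    · intro i _
      by_cases hi : i < n
      · rw [if_pos hi]; exact hz i
      · rw [if_neg hi]; exact hxA
  have haLA : aLim ∈ A := by
    have hpart : ∀ n, xs + ∑ i ∈ Finset.range n, w i • (a i - xs) ∈ A := by
      intro n
      have hco : xs + ∑ i ∈ Finset.range n, w i • (a i - xs)
          = (∑ i ∈ Finset.range n, w i • a i) + ((2:ℝ)⁻¹ ^ n) • xs := by
        have h1 : ∀ i ∈ Finset.range n, w i • (a i - xs) = w i • a i - w i • xs :=
          fun i _ => smul_sub _ _ _
        rw [Finset.sum_congr rfl h1, Finset.sum_sub_distrib, ← Finset.sum_smul, hWsum n,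
          sub_smul, one_smul]
        abel
      rw [hco]
      exact hconv_comb n a haA
    have htend : Tendsto (fun n => xs + ∑ i ∈ Finset.range n, w i • (a i - xs)) atTop
        (𝓝 aLim) := by
      rw [haLdef]
      exact (hsA.hasSum.tendsto_sum_nat).const_add xs
    exact hAcl.mem_of_tendsto htend (Eventually.of_forall hpart)
  have hkLK : kLim ∈ K := by
    have hpart : ∀ n, (∑ i ∈ Finset.range n, w i • k i) + ((2:ℝ)⁻¹ ^ n) • b ∈ K := by
      intro n
      classical
      have := hKconv.sum_mem (t := Finset.range (n+1))
        (w := fun i => if i < n then w i else (2:ℝ)⁻¹ ^ n)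
        (z := fun i => if i < n then k i else b) ?_ ?_ ?_
      · convert this using 1
        rw [Finset.sum_range_succ, if_neg (lt_irrefl n)]
        congr 1
        · refine (Finset.sum_congr rfl fun i hi => ?_).symm
          rw [if_pos (Finset.mem_range.mp hi), if_pos (Finset.mem_range.mp hi)]
        · rw [if_neg (lt_irrefl n)]
      · intro i _
        by_cases hi : i < n
        · rw [if_pos hi]; exact (hw0 i).le
        · rw [if_neg hi]; positivity
      · rw [Finset.sum_range_succ, if_neg (lt_irrefl n)]
        have : ∑ i ∈ Finset.range n, (if i < n then w i else (2:ℝ)⁻¹ ^ n) =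
            ∑ i ∈ Finset.range n, w i :=
          Finset.sum_congr rfl fun i hi => if_pos (Finset.mem_range.mp hi)
        rw [this, hWsum n]; ring
      · intro i _
        by_cases hi : i < n
        · rw [if_pos hi]; exact hkK i
        · rw [if_neg hi]; exact hb
    have h2n : Tendsto (fun n : ℕ => ((2:ℝ)⁻¹ ^ n) • b) atTop (𝓝 0) := by
      have h0 : Tendsto (fun n : ℕ => (2:ℝ)⁻¹ ^ n) atTop (𝓝 0) :=
        tendsto_pow_atTop_nhds_zero_of_lt_one (by norm_num) (by norm_num)
      simpa using h0.smul_const b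
    have htend : Tendsto (fun n => (∑ i ∈ Finset.range n, w i • k i) + ((2:ℝ)⁻¹ ^ n) • b)
        atTop (𝓝 kLim) := by
      rw [hkLdef]
      simpa using (hsK.hasSum.tendsto_sum_nat).add h2n
    exact hKcl.mem_of_tendsto htend (Eventually.of_forall hpart)
  -- the equation
  have hu0' : Tendsto u atTop (𝓝 0) := by
    refine squeeze_zero_norm (fun n => (huinv n).le) ?_
    have h0 : Tendsto (fun n : ℕ => (2:ℝ)⁻¹ ^ (n+1)) atTop (𝓝 0) :=
      (tendsto_pow_atTop_nhds_zero_of_lt_one (by norm_num) (by norm_num)).comp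
        (tendsto_add_atTop_nat 1)
    simpa using h0.const_mul σ₀
  have hpartC : Tendsto (fun n => ∑ i ∈ Finset.range n, w i • (b + L (a i - xs) - k i))
      atTop (𝓝 y) := by
    have : (fun n => ∑ i ∈ Finset.range n, w i • (b + L (a i - xs) - k i))
        = fun n => y - u n := by
      funext n
      rw [← htel n]; abel
    rw [this]
    simpa using (tendsto_const_nhds (x := y)).sub hu0'
  have htsumC : ∑' n, w n • (b + L (a n - xs) - k n) = y :=
    tendsto_nhds_unique hsC.hasSum.tendsto_sum_nat hpartC
  have hsA' : Summable (fun n => L (w n • (a n - xs))) := by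
    have : (fun n => L (w n • (a n - xs))) = (fun n => L.toLinearMap.toAddMonoidHom
      (w n • (a n - xs))) := rfl
    exact hsA.map L.toLinearMap.toAddMonoidHom L.continuous
  have heq : y = b + L (aLim - xs) - kLim := by
    have hexp : ∀ n, w n • (b + L (a n - xs) - k n)
        = (w n • b + L (w n • (a n - xs))) - w n • k n := by
      intro n
      rw [L.map_smul, smul_sub, smul_add]
    rw [← htsumC]
    calc ∑' n, w n • (b + L (a n - xs) - k n)
        = ∑' n, ((w n • b + L (w n • (a n - xs))) - w n • k n) := tsum_congr hexp
      _ = (∑' n, (w n • b + L (w n • (a n - xs)))) - ∑' n, w n • k n :=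
          Summable.tsum_sub (hsb.add hsA') hsK
      _ = ((∑' n, w n • b) + ∑' n, L (w n • (a n - xs))) - kLim := by
          rw [Summable.tsum_add hsb hsA', hkLdef]
      _ = b + L (aLim - xs) - kLim := by
          rw [Summable.tsum_smul_const hwsummable, hwtsum, one_smul, ← L.map_tsum hsA]
          have hax : aLim - xs = ∑' n, w n • (a n - xs) := by rw [haLdef]; abel
          rw [hax]
  refine ⟨aLim, haLA, kLim, hkLK, heq, ?_⟩
  have hbnd : ‖aLim - xs‖ ≤ (P:ℝ) := by
    have h1 : aLim - xs = ∑' n, w n • (a n - xs) := by rw [haLdef]; abel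
    rw [h1]
    calc ‖∑' n, w n • (a n - xs)‖ ≤ ∑' n, ‖w n • (a n - xs)‖ :=
          norm_tsum_le_tsum_norm hsAn
      _ ≤ ∑' n, w n * (P:ℝ) := by
          refine Summable.tsum_le_tsum (fun n => ?_) hsAn (hwsummable.mul_right (P:ℝ))
          rw [norm_smul, Real.norm_of_nonneg (hw0 n).le]
          exact mul_le_mul_of_nonneg_left (hab n) (hw0 n).le
      _ = (P:ℝ) := by rw [tsum_mul_right, hwtsum, one_mul]
  linarith

theorem robinson_reg {E Y : Type*} [NormedAddCommGroup E] [NormedSpace ℝ E] [CompleteSpace E]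
    [NormedAddCommGroup Y] [NormedSpace ℝ Y] [CompleteSpace Y]
    {A : Set E} {K : Set Y} (hAcl : IsClosed A) (hAconv : Convex ℝ A)
    (hKcl : IsClosed K) (hKconv : Convex ℝ K)
    {xs : E} (hxA : xs ∈ A) {b : Y} (hb : b ∈ K) (L : E →L[ℝ] Y)
    (hR : (0:Y) ∈ interior {y | ∃ a ∈ A, ∃ k ∈ K, y = b + L (a - xs) - k}) :
    ∃ c > (0:ℝ), ∃ σ > (0:ℝ), ∃ R > (0:ℝ), ∀ u ∈ A, ‖u - xs‖ ≤ R → ∀ ku ∈ K, ∀ y : Y,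
      ‖y‖ ≤ σ → ∃ a ∈ A, ∃ k ∈ K, y = b + L (a - xs) - k ∧
        ‖a - u‖ ≤ c * ‖y - (b + L (u - xs) - ku)‖ := by
  obtain ⟨σ, hσ, R, hRpos, hsolve⟩ := robinson_open hAcl hAconv hKcl hKconv hxA hb L hR
  refine ⟨4*R/σ, by positivity, σ/2, by positivity, R, hRpos, ?_⟩
  intro u huA huR ku hku y hy
  set v : Y := b + L (u - xs) - ku with hvdef
  by_cases hd : ‖y - v‖ = 0
  · have hyv : y = v := by
      have := norm_eq_zero.mp hd
      rwa [sub_eq_zero] at this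
    refine ⟨u, huA, ku, hku, by rw [hyv], ?_⟩
    rw [hd, mul_zero, sub_self, norm_zero]
  · have hd0 : 0 < ‖y - v‖ := lt_of_le_of_ne (norm_nonneg _) (Ne.symm hd)
    set dd : ℝ := ‖y - v‖ with hdd
    set z : Y := y + ((σ/2)/dd) • (y - v) with hzdef
    have hz : ‖z‖ ≤ σ := by
      calc ‖z‖ ≤ ‖y‖ + ‖((σ/2)/dd) • (y - v)‖ := norm_add_le _ _
        _ = ‖y‖ + (σ/2)/dd * dd := by
            rw [norm_smul, Real.norm_of_nonneg (by positivity)]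
        _ = ‖y‖ + σ/2 := by rw [div_mul_cancel₀ _ (ne_of_gt hd0)]
        _ ≤ σ/2 + σ/2 := by linarith
        _ = σ := by ring
    obtain ⟨a0, ha0, k0, hk0, hzeq, ha0b⟩ := hsolve z hz
    set τ : ℝ := dd / (dd + σ/2) with hτdef
    have hden : 0 < dd + σ/2 := by positivity
    have hτ0 : 0 < τ := by positivity
    have hτ1 : τ < 1 := by rw [hτdef, div_lt_one hden]; linarith
    refine ⟨τ • a0 + (1-τ) • u, hAconv ha0 huA hτ0.le (by linarith) (by ring),
      τ • k0 + (1-τ) • ku, hKconv hk0 hku hτ0.le (by linarith) (by ring), ?_, ?_⟩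
    · -- equation
      have hsplit : b + L (τ • a0 + (1-τ) • u - xs) - (τ • k0 + (1-τ) • ku)
          = τ • (b + L (a0 - xs) - k0) + (1-τ) • (b + L (u - xs) - ku) := by
        have h1 : τ • a0 + (1-τ) • u - xs = τ • (a0 - xs) + (1-τ) • (u - xs) := by module
        rw [h1, map_add, map_smul, map_smul]
        module
      rw [hsplit, ← hzeq, ← hvdef]
      have hcoef : τ - 1 + τ * ((σ/2)/dd) = 0 := by
        rw [hτdef]; field_simp; ring
      have : τ • z + (1-τ) • v - y = (τ - 1 + τ * ((σ/2)/dd)) • (y - v) := by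
        rw [hzdef]; module
      rw [hcoef, zero_smul] at this
      have := sub_eq_zero.mp this
      rw [this]
    · -- distance bound
      have h1 : τ • a0 + (1-τ) • u - u = τ • (a0 - u) := by module
      rw [h1, norm_smul, Real.norm_of_nonneg hτ0.le]
      have h2 : ‖a0 - u‖ ≤ 2 * R := by
        calc ‖a0 - u‖ = ‖(a0 - xs) - (u - xs)‖ := by abel_nf
          _ ≤ ‖a0 - xs‖ + ‖u - xs‖ := norm_sub_le _ _
          _ ≤ 2 * R := by linarith
      have h3 : τ ≤ dd / (σ/2) := by
        rw [hτdef]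
        gcongr
        · linarith
      calc τ * ‖a0 - u‖ ≤ (dd / (σ/2)) * (2 * R) :=
            mul_le_mul h3 h2 (norm_nonneg _) (by positivity)
        _ = 4 * R / σ * dd := by field_simp; ring

set_option maxHeartbeats 1000000 in
theorem error_bound {E Y : Type*} [NormedAddCommGroup E] [NormedSpace ℝ E] [CompleteSpace E]
    [NormedAddCommGroup Y] [NormedSpace ℝ Y] [CompleteSpace Y]
    {A : Set E} {K : Set Y} (hAcl : IsClosed A) (hAconv : Convex ℝ A)
    (hKcl : IsClosed K) (hKconv : Convex ℝ K)
    {xs : E} (hxA : xs ∈ A) {G : E → Y} (hG : ContDiff ℝ 1 G) (hxK : G xs ∈ K)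
    (hR : (0:Y) ∈ interior {y | ∃ a ∈ A, ∃ k ∈ K, y = G xs + fderiv ℝ G xs (a - xs) - k}) :
    ∃ κ > (0:ℝ), ∃ M > (0:ℝ), ∃ ρ > (0:ℝ), ∀ x ∈ A, ‖x - xs‖ ≤ ρ →
      Metric.infDist (G x) K ≤ M * ‖x - xs‖ ∧
      ∃ x' ∈ A, G x' ∈ K ∧ ‖x' - x‖ ≤ κ * Metric.infDist (G x) K := by
  classical
  set L : E →L[ℝ] Y := fderiv ℝ G xs with hLdef
  set b : Y := G xs with hbdef
  obtain ⟨c, hc0, σ, hσ0, R, hR0, hreg⟩ := robinson_reg hAcl hAconv hKcl hKconv hxA hxK L hR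
  set ε : ℝ := min (1/(2*c)) 1 with hεdef
  have hε0 : 0 < ε := lt_min (by positivity) one_pos
  have hε1 : ε ≤ 1 := min_le_right _ _
  have hεc : ε * c ≤ 1/2 := by
    have h1 : ε ≤ 1/(2*c) := min_le_left _ _
    calc ε * c ≤ (1/(2*c)) * c := by gcongr
      _ = 1/2 := by field_simp
  -- continuity of fderiv at xs
  obtain ⟨ρ₁, hρ₁0, hρ₁⟩ : ∃ ρ₁ > 0, ∀ z : E, dist z xs ≤ ρ₁ → ‖fderiv ℝ G z - L‖ ≤ ε := by
    have hc' := (hG.continuous_fderiv one_ne_zero).continuousAt (x := xs)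
    rw [Metric.continuousAt_iff] at hc'
    obtain ⟨δ', hδ'0, hδ'⟩ := hc' ε hε0
    refine ⟨δ'/2, by positivity, fun z hz => ?_⟩
    have := hδ' (lt_of_le_of_lt hz (by linarith))
    rw [dist_eq_norm] at this
    exact this.le
  set ρ₀ : ℝ := min ρ₁ (min R σ) with hρ₀def
  have hρ₀0 : 0 < ρ₀ := lt_min hρ₁0 (lt_min hR0 hσ0)
  have hρ₀R : ρ₀ ≤ R := (min_le_right _ _).trans (min_le_left _ _)
  have hρ₀σ : ρ₀ ≤ σ := (min_le_right _ _).trans (min_le_right _ _)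
  have hρ₀ρ₁ : ρ₀ ≤ ρ₁ := min_le_left _ _
  have hcb : Convex ℝ (Metric.closedBall xs ρ₀) := convex_closedBall _ _
  have hGdiff : Differentiable ℝ G := hG.differentiable one_ne_zero
  -- approximate linearity on the ball
  have hmvt : ∀ u ∈ Metric.closedBall xs ρ₀, ∀ v ∈ Metric.closedBall xs ρ₀,
      ‖G u - G v - L (u - v)‖ ≤ ε * ‖u - v‖ := by
    intro u hu v hv
    have hder : ∀ z ∈ Metric.closedBall xs ρ₀,
        HasFDerivWithinAt (fun w => G w - L w) (fderiv ℝ G z - L) (Metric.closedBall xs ρ₀) z :=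
      fun z _ => ((hGdiff z).hasFDerivAt.sub L.hasFDerivAt).hasFDerivWithinAt
    have hbd : ∀ z ∈ Metric.closedBall xs ρ₀, ‖fderiv ℝ G z - L‖ ≤ ε := by
      intro z hz
      exact hρ₁ z ((Metric.mem_closedBall.mp hz).trans hρ₀ρ₁)
    have := hcb.norm_image_sub_le_of_norm_hasFDerivWithin_le hder hbd hv hu
    have heq : G u - L u - (G v - L v) = G u - G v - L (u - v) := by
      rw [map_sub]; abel
    rwa [heq] at this
  -- Lipschitz bound for G on the ball
  set M : ℝ := ‖L‖ + ε with hMdef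
  have hM0 : 0 < M := by positivity
  have hlip : ∀ u ∈ Metric.closedBall xs ρ₀, ∀ v ∈ Metric.closedBall xs ρ₀,
      ‖G u - G v‖ ≤ M * ‖u - v‖ := by
    intro u hu v hv
    have hder : ∀ z ∈ Metric.closedBall xs ρ₀,
        HasFDerivWithinAt G (fderiv ℝ G z) (Metric.closedBall xs ρ₀) z :=
      fun z _ => (hGdiff z).hasFDerivAt.hasFDerivWithinAt
    have hbd : ∀ z ∈ Metric.closedBall xs ρ₀, ‖fderiv ℝ G z‖ ≤ M := by
      intro z hz
      have h1 := hρ₁ z ((Metric.mem_closedBall.mp hz).trans hρ₀ρ₁)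
      calc ‖fderiv ℝ G z‖ = ‖L + (fderiv ℝ G z - L)‖ := by rw [add_sub_cancel]
        _ ≤ ‖L‖ + ‖fderiv ℝ G z - L‖ := norm_add_le _ _
        _ ≤ ‖L‖ + ε := by linarith
    exact hcb.norm_image_sub_le_of_norm_hasFDerivWithin_le hder hbd hv hu
  set ρ : ℝ := ρ₀ / (1 + 4*c*M) with hρdef
  have hρ0 : 0 < ρ := by positivity
  have hden1 : (1:ℝ) ≤ 1 + 4*c*M := by nlinarith
  have hρρ₀ : ρ ≤ ρ₀ := by
    rw [hρdef]
    calc ρ₀ / (1 + 4*c*M) ≤ ρ₀ / 1 := by gcongr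
      _ = ρ₀ := div_one _
  refine ⟨4*c, by positivity, M, hM0, ρ, hρ0, ?_⟩
  intro x hxA' hxρ
  have hxball : x ∈ Metric.closedBall xs ρ₀ :=
    Metric.mem_closedBall.mpr (by rw [dist_eq_norm]; linarith)
  set δ : ℝ := Metric.infDist (G x) K with hδdef
  have hδ0 : 0 ≤ δ := Metric.infDist_nonneg
  have hKne : K.Nonempty := ⟨G xs, hxK⟩
  have hδM : δ ≤ M * ‖x - xs‖ := by
    have h1 : δ ≤ dist (G x) (G xs) := Metric.infDist_le_dist_of_mem hxK
    rw [dist_eq_norm] at h1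
    exact h1.trans (hlip x hxball xs (Metric.mem_closedBall_self hρ₀0.le))
  refine ⟨hδM, ?_⟩
  rcases eq_or_lt_of_le hδ0 with hδz | hδpos
  · -- G x ∈ K already
    have hGxK : G x ∈ K := by
      rw [hKcl.mem_iff_infDist_zero hKne]
      exact hδz.symm
    refine ⟨x, hxA', hGxK, ?_⟩
    rw [sub_self, norm_zero]
    positivity
  · obtain ⟨k₀, hk₀K, hk₀d⟩ : ∃ k₀ ∈ K, dist (G x) k₀ < 2*δ :=
      (Metric.infDist_lt_iff hKne).mp (by rw [← hδdef]; linarith)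
    have hk₀ : ‖G x - k₀‖ ≤ 2*δ := by rw [← dist_eq_norm]; linarith
    have hδMρ : δ ≤ M * ρ := hδM.trans (by gcongr)
    have hρsum : ρ * (1 + 4*c*M) = ρ₀ := by
      rw [hρdef]; field_simp
    have step : ∀ (n : ℕ) (p : E × Y), p.1 ∈ A → p.2 ∈ K →
        ‖p.1 - x‖ ≤ 4*c*δ*(1 - (2:ℝ)⁻¹^n) → ‖G p.1 - p.2‖ ≤ 2*δ*(2:ℝ)⁻¹^n →
        ∃ q : E × Y, q.1 ∈ A ∧ q.2 ∈ K ∧ ‖q.1 - p.1‖ ≤ 2*c*δ*(2:ℝ)⁻¹^n ∧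
          ‖q.1 - x‖ ≤ 4*c*δ*(1 - (2:ℝ)⁻¹^(n+1)) ∧ ‖G q.1 - q.2‖ ≤ 2*δ*(2:ℝ)⁻¹^(n+1) := by
      intro n p hpA hpK hpx hpd
      have h2n0 : (0:ℝ) < (2:ℝ)⁻¹^n := by positivity
      have hcd0 : (0:ℝ) ≤ 4*c*δ*(2:ℝ)⁻¹^n := by positivity
      have hcd1 : (0:ℝ) ≤ 4*c*δ*(2:ℝ)⁻¹^(n+1) := by positivity
      have hM4 : 4*c*δ*1 ≤ 4*c*(M*ρ) :=
        by rw [mul_one]; exact mul_le_mul_of_nonneg_left hδMρ (by positivity : (0:ℝ) ≤ 4*c)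
      have h2n1 : (2:ℝ)⁻¹^n ≤ 1 := pow_le_one₀ (by norm_num) (by norm_num)
      have hpxs : ‖p.1 - xs‖ ≤ ρ₀ := by
        calc ‖p.1 - xs‖ = ‖(p.1 - x) + (x - xs)‖ := by abel_nf
          _ ≤ ‖p.1 - x‖ + ‖x - xs‖ := norm_add_le _ _
          _ ≤ 4*c*δ*1 + ρ := by
              gcongr
              exact hpx.trans (by nlinarith [hcd0])
          _ ≤ 4*c*(M*ρ) + ρ := by linarith [hM4]
          _ = ρ * (1 + 4*c*M) := by ring
          _ = ρ₀ := hρsum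
      have hpball : p.1 ∈ Metric.closedBall xs ρ₀ := by
        rw [Metric.mem_closedBall, dist_eq_norm]; exact hpxs
      have hpR : ‖p.1 - xs‖ ≤ R := hpxs.trans hρ₀R
      set y : Y := b + L (p.1 - xs) - G p.1 with hydef
      have hy : ‖y‖ ≤ σ := by
        have h1 := hmvt p.1 hpball xs (Metric.mem_closedBall_self hρ₀0.le)
        have h2 : y = -(G p.1 - G xs - L (p.1 - xs)) := by rw [hydef, hbdef]; abel
        rw [h2, norm_neg]
        calc ‖G p.1 - G xs - L (p.1 - xs)‖ ≤ ε * ‖p.1 - xs‖ := h1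
          _ ≤ 1 * ρ₀ := mul_le_mul hε1 hpxs (norm_nonneg _) (by norm_num)
          _ ≤ σ := by rw [one_mul]; exact hρ₀σ
      obtain ⟨a, haA, k'', hk''K, hyeq, hstepb⟩ := hreg p.1 hpA hpR p.2 hpK y hy
      have hd1 : y - (b + L (p.1 - xs) - p.2) = p.2 - G p.1 := by rw [hydef]; abel
      have hbnd : ‖a - p.1‖ ≤ 2*c*δ*(2:ℝ)⁻¹^n := by
        rw [hd1] at hstepb
        calc ‖a - p.1‖ ≤ c * ‖p.2 - G p.1‖ := hstepb
          _ = c * ‖G p.1 - p.2‖ := by rw [norm_sub_rev]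
          _ ≤ c * (2*δ*(2:ℝ)⁻¹^n) := by gcongr
          _ = 2*c*δ*(2:ℝ)⁻¹^n := by ring
      have hax : ‖a - x‖ ≤ 4*c*δ*(1 - (2:ℝ)⁻¹^(n+1)) := by
        calc ‖a - x‖ = ‖(a - p.1) + (p.1 - x)‖ := by abel_nf
          _ ≤ ‖a - p.1‖ + ‖p.1 - x‖ := norm_add_le _ _
          _ ≤ 2*c*δ*(2:ℝ)⁻¹^n + 4*c*δ*(1 - (2:ℝ)⁻¹^n) := by gcongr
          _ = 4*c*δ*(1 - (2:ℝ)⁻¹^(n+1)) := by ring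
      have haxs : ‖a - xs‖ ≤ ρ₀ := by
        calc ‖a - xs‖ = ‖(a - x) + (x - xs)‖ := by abel_nf
          _ ≤ ‖a - x‖ + ‖x - xs‖ := norm_add_le _ _
          _ ≤ 4*c*δ*1 + ρ := by
              gcongr
              exact hax.trans (by nlinarith [hcd1])
          _ ≤ 4*c*(M*ρ) + ρ := by linarith [hM4]
          _ = ρ * (1 + 4*c*M) := by ring
          _ = ρ₀ := hρsum
      have haball : a ∈ Metric.closedBall xs ρ₀ := by
        rw [Metric.mem_closedBall, dist_eq_norm]; exact haxs
      have hk''eq : k'' = G p.1 + L (a - p.1) := by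
        have h4 : k'' = b + L (a - xs) - (b + L (a - xs) - k'') := by abel
        rw [← hyeq, hydef] at h4
        have h5 : L (a - p.1) = L (a - xs) - L (p.1 - xs) := by
          rw [← map_sub]
          congr 1
          abel
        rw [h4, h5]
        abel
      have hdef : ‖G a - k''‖ ≤ 2*δ*(2:ℝ)⁻¹^(n+1) := by
        have h6 : G a - k'' = G a - G p.1 - L (a - p.1) := by rw [hk''eq]; abel
        rw [h6]
        calc ‖G a - G p.1 - L (a - p.1)‖ ≤ ε * ‖a - p.1‖ := hmvt a haball p.1 hpball
          _ ≤ ε * (2*c*δ*(2:ℝ)⁻¹^n) := by gcongr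
          _ = (ε*c) * (2*δ*(2:ℝ)⁻¹^n) := by ring
          _ ≤ (1/2) * (2*δ*(2:ℝ)⁻¹^n) := by
              have : (0:ℝ) ≤ 2*δ*(2:ℝ)⁻¹^n := by positivity
              exact mul_le_mul_of_nonneg_right hεc this
          _ = 2*δ*(2:ℝ)⁻¹^(n+1) := by ring
      exact ⟨(a, k''), haA, hk''K, hbnd, hax, hdef⟩
    choose! Fq hq1 hq2 hq3 hq4 hq5 using step
    obtain ⟨X, hX0, hXs⟩ : ∃ X : ℕ → E × Y, X 0 = (x, k₀) ∧ ∀ n, X (n+1) = Fq n (X n) :=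
      ⟨fun n => Nat.rec (x, k₀) (fun m xm => Fq m xm) n, rfl, fun n => rfl⟩
    have hinv : ∀ n, (X n).1 ∈ A ∧ (X n).2 ∈ K ∧
        ‖(X n).1 - x‖ ≤ 4*c*δ*(1 - (2:ℝ)⁻¹^n) ∧ ‖G (X n).1 - (X n).2‖ ≤ 2*δ*(2:ℝ)⁻¹^n := by
      intro n
      induction n with
      | zero =>
        rw [hX0]
        refine ⟨hxA', hk₀K, ?_, ?_⟩
        · simp
        · simpa using hk₀
      | succ m ih =>
        obtain ⟨h1, h2, h3, h4⟩ := ih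
        rw [hXs m]
        exact ⟨hq1 m (X m) h1 h2 h3 h4, hq2 m (X m) h1 h2 h3 h4,
          hq4 m (X m) h1 h2 h3 h4, hq5 m (X m) h1 h2 h3 h4⟩
    have hstepn : ∀ n, ‖(X (n+1)).1 - (X n).1‖ ≤ 2*c*δ*(2:ℝ)⁻¹^n := by
      intro n
      obtain ⟨h1, h2, h3, h4⟩ := hinv n
      rw [hXs n]
      exact hq3 n (X n) h1 h2 h3 h4
    have hcauchy : CauchySeq (fun n => (X n).1) := by
      refine cauchySeq_of_le_geometric (2:ℝ)⁻¹ (2*c*δ) (by norm_num) fun n => ?_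
      rw [dist_eq_norm, norm_sub_rev]
      exact hstepn n
    obtain ⟨x', hx'⟩ := cauchySeq_tendsto_of_complete hcauchy
    have hx'A : x' ∈ A := hAcl.mem_of_tendsto hx' (Eventually.of_forall fun n => (hinv n).1)
    have hx'd : ‖x' - x‖ ≤ 4*c*δ := by
      have htd : Tendsto (fun n => ‖(X n).1 - x‖) atTop (𝓝 ‖x' - x‖) :=
        (hx'.sub tendsto_const_nhds).norm
      refine le_of_tendsto htd (Eventually.of_forall fun n => ?_)
      refine ((hinv n).2.2.1).trans ?_
      have h2n1 : (2:ℝ)⁻¹^n ≤ 1 := pow_le_one₀ (by norm_num) (by norm_num)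
      have h2n0 : (0:ℝ) < (2:ℝ)⁻¹^n := by positivity
      nlinarith [mul_nonneg (mul_nonneg (by norm_num : (0:ℝ) ≤ 4) hc0.le) hδ0]
    have hGx'K : G x' ∈ K := by
      have hGt : Tendsto (fun n => G (X n).1) atTop (𝓝 (G x')) :=
        (hGdiff.continuous.continuousAt.tendsto.comp hx')
      have hdefec : Tendsto (fun n => G (X n).1 - (X n).2) atTop (𝓝 0) := by
        refine squeeze_zero_norm (fun n => (hinv n).2.2.2) ?_
        have h0 : Tendsto (fun n : ℕ => (2:ℝ)⁻¹ ^ n) atTop (𝓝 0) :=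
          tendsto_pow_atTop_nhds_zero_of_lt_one (by norm_num) (by norm_num)
        simpa using h0.const_mul (2*δ)
      have hkt : Tendsto (fun n => (X n).2) atTop (𝓝 (G x')) := by
        have := hGt.sub hdefec
        simpa using this
      exact hKcl.mem_of_tendsto hkt (Eventually.of_forall fun n => (hinv n).2.1)
    exact ⟨x', hx'A, hGx'K, by linarith⟩

theorem fmax_lip {d : ℕ} {W : Type*} [TopologicalSpace W] [CompactSpace W] [Nonempty W]
    (f : EuclideanSpace ℝ (Fin d) → W → ℝ)
    (hfdiff : ∀ ω, Differentiable ℝ (fun x => f x ω))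
    (hfc : Continuous fun p : EuclideanSpace ℝ (Fin d) × W => f p.1 p.2)
    (hfg : Continuous fun p : EuclideanSpace ℝ (Fin d) × W =>
      gradient (fun z => f z p.2) p.1)
    (xs : EuclideanSpace ℝ (Fin d)) (r : ℝ) (hr : 0 < r) :
    ∃ Lf : ℝ, 0 ≤ Lf ∧ ∀ u v : EuclideanSpace ℝ (Fin d), ‖u - xs‖ ≤ r → ‖v - xs‖ ≤ r →
      sSup (range fun ω => f u ω) ≤ sSup (range fun ω => f v ω) + Lf * ‖u - v‖ := by
  classical
  set B : Set (EuclideanSpace ℝ (Fin d)) := Metric.closedBall xs r with hBdef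
  have hBcp : IsCompact B := isCompact_closedBall _ _
  have hBconv : Convex ℝ B := convex_closedBall _ _
  have hBne : B.Nonempty := ⟨xs, Metric.mem_closedBall_self hr.le⟩
  set S : Set (EuclideanSpace ℝ (Fin d) × W) := B ×ˢ (univ : Set W) with hSdef
  have hScp : IsCompact S := hBcp.prod isCompact_univ
  have hSne : S.Nonempty := ⟨(xs, Classical.arbitrary W), ⟨Metric.mem_closedBall_self hr.le,
    mem_univ _⟩⟩
  obtain ⟨p₀, hp₀S, hp₀max⟩ := hScp.exists_isMaxOn hSne
    ((continuous_norm.comp hfg).continuousOn)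
  have hp₀ : ∀ p ∈ S, ‖gradient (fun z => f z p.2) p.1‖ ≤
      ‖gradient (fun z => f z p₀.2) p₀.1‖ := fun p hp => hp₀max hp
  set Lf : ℝ := ‖gradient (fun z => f z p₀.2) p₀.1‖ with hLf
  have hLf0 : 0 ≤ Lf := norm_nonneg _
  refine ⟨Lf, hLf0, ?_⟩
  intro u v hu hv
  have huB : u ∈ B := by rw [hBdef, Metric.mem_closedBall, dist_eq_norm]; exact hu
  have hvB : v ∈ B := by rw [hBdef, Metric.mem_closedBall, dist_eq_norm]; exact hv
  -- pointwise Lipschitz estimate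
  have hptw : ∀ ω, f u ω ≤ f v ω + Lf * ‖u - v‖ := by
    intro ω
    have hder : ∀ z ∈ B, HasFDerivWithinAt (fun x => f x ω) (fderiv ℝ (fun x => f x ω) z) B z :=
      fun z _ => ((hfdiff ω) z).hasFDerivAt.hasFDerivWithinAt
    have hbd : ∀ z ∈ B, ‖fderiv ℝ (fun x => f x ω) z‖ ≤ Lf := by
      intro z hz
      have h1 : fderiv ℝ (fun x => f x ω) z
          = (InnerProductSpace.toDual ℝ _) (gradient (fun x => f x ω) z) := by
        rw [gradient, LinearIsometryEquiv.apply_symm_apply]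
      rw [h1, LinearIsometryEquiv.norm_map]
      exact hp₀ (z, ω) ⟨hz, mem_univ _⟩
    have := hBconv.norm_image_sub_le_of_norm_hasFDerivWithin_le hder hbd hvB huB
    have h2 : f u ω - f v ω ≤ Lf * ‖u - v‖ := (le_abs_self _).trans
      (by rw [← Real.norm_eq_abs]; exact this)
    linarith
  -- transfer to suprema
  have hbdd : ∀ x : EuclideanSpace ℝ (Fin d), BddAbove (range fun ω => f x ω) := by
    intro x
    exact (isCompact_range (hfc.comp (continuous_const.prodMk continuous_id))).bddAbove
  refine csSup_le (range_nonempty _) (fun y hy => ?_)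
  obtain ⟨ω, rfl⟩ := hy
  calc f u ω ≤ f v ω + Lf * ‖u - v‖ := hptw ω
    _ ≤ sSup (range fun ω => f v ω) + Lf * ‖u - v‖ := by
        gcongr
        exact le_csSup (hbdd v) (mem_range_self ω)

end AuxPenalty

/-!
Statement 10: if x* is a locally optimal solution of (P) at which RCQ holds, then the penalty
function Φ_c is locally exact at x* (∃ c* ≥ 0 such that x* is a local minimiser of Φ_c on A for
all c ≥ c*); furthermore, in this case the first order growth condition for (P) holds at x*
iff Φ_c satisfies the first order growth condition on A at x* for some c ≥ 0.
-/
theorem penalty_function_local_exactness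
    {d : ℕ} {W : Type*} [TopologicalSpace W] [CompactSpace W] [T2Space W] [Nonempty W]
    {Y : Type*} [NormedAddCommGroup Y] [NormedSpace ℝ Y] [CompleteSpace Y]
    (A : Set (EuclideanSpace ℝ (Fin d))) (K : Set Y)
    (G : EuclideanSpace ℝ (Fin d) → Y) (f : EuclideanSpace ℝ (Fin d) → W → ℝ)
    (hAne : A.Nonempty) (hAcl : IsClosed A) (hAconv : Convex ℝ A)
    (hKne : K.Nonempty) (hKcl : IsClosed K) (hKconv : Convex ℝ K)
    (hKcone : ∀ (c : ℝ), 0 ≤ c → ∀ y ∈ K, c • y ∈ K)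
    (hG : ContDiff ℝ 1 G)
    (hfdiff : ∀ ω, Differentiable ℝ (fun x => f x ω))
    (hfc : Continuous fun p : EuclideanSpace ℝ (Fin d) × W => f p.1 p.2)
    (hfg : Continuous fun p : EuclideanSpace ℝ (Fin d) × W => gradient (fun z => f z p.2) p.1)
    (xs : EuclideanSpace ℝ (Fin d)) (hxA : xs ∈ A) (hxK : G xs ∈ K)
    (hopt : ∃ U ∈ 𝓝 xs, ∀ x ∈ U, x ∈ A → G x ∈ K → Fmax f xs ≤ Fmax f x)
    (hRCQ : RobinsonCQ G K A xs) :
    (∃ cstar : ℝ, 0 ≤ cstar ∧ ∀ c : ℝ, cstar ≤ c →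
      ∃ U ∈ 𝓝 xs, ∀ x ∈ U, x ∈ A → penaltyFn f G K c xs ≤ penaltyFn f G K c x) ∧
    ((∃ ρ > (0:ℝ), ∃ U ∈ 𝓝 xs, ∀ x ∈ U, x ∈ A → G x ∈ K →
        Fmax f xs + ρ * ‖x - xs‖ ≤ Fmax f x) ↔
      (∃ c : ℝ, 0 ≤ c ∧ ∃ ρ > (0:ℝ), ∃ U ∈ 𝓝 xs, ∀ x ∈ U, x ∈ A →
        penaltyFn f G K c xs + ρ * ‖x - xs‖ ≤ penaltyFn f G K c x)) := by
  
  obtain ⟨κ, hκ0, M, hM0, ρEB, hρEB0, hEB⟩ :=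
    error_bound hAcl hAconv hKcl hKconv hxA hG hxK hRCQ
  obtain ⟨Lf, hLf0, hLip⟩ := fmax_lip f hfdiff hfc hfg xs 1 one_pos
  have hLip' : ∀ u v : EuclideanSpace ℝ (Fin d), ‖u - xs‖ ≤ 1 → ‖v - xs‖ ≤ 1 →
      Fmax f u ≤ Fmax f v + Lf * ‖u - v‖ := hLip
  have hδnn : ∀ x : EuclideanSpace ℝ (Fin d), 0 ≤ Metric.infDist (G x) K :=
    fun x => Metric.infDist_nonneg
  have hpen_xs : ∀ c : ℝ, penaltyFn f G K c xs = Fmax f xs := by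
    intro c
    simp only [penaltyFn, Metric.infDist_zero_of_mem hxK, mul_zero, add_zero]
  have main : ∀ rT : ℝ, 0 < rT → ∃ rU > (0:ℝ), ∀ x ∈ Metric.ball xs rU, x ∈ A →
      ‖x - xs‖ ≤ 1 ∧ ‖x - xs‖ < rT ∧
      ∃ x' ∈ A, G x' ∈ K ∧ ‖x' - x‖ ≤ κ * Metric.infDist (G x) K ∧
        ‖x' - xs‖ < rT ∧ ‖x' - xs‖ ≤ 1 := by
    intro rT hrT
    set m := min ρEB (min 1 rT) with hm
    have hm0 : 0 < m := lt_min hρEB0 (lt_min one_pos hrT)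
    have hden : (1:ℝ) ≤ 1 + κ*M := by nlinarith
    have hden0 : (0:ℝ) < 1 + κ*M := by linarith
    refine ⟨m / (1 + κ*M), by positivity, ?_⟩
    intro x hxU hxA'
    have hxn : ‖x - xs‖ < m / (1 + κ*M) := by
      rw [← dist_eq_norm]; exact hxU
    have hxm : ‖x - xs‖ < m := lt_of_lt_of_le hxn (by
      calc m / (1+κ*M) ≤ m / 1 := by gcongr
        _ = m := div_one _)
    have hx1 : ‖x - xs‖ ≤ 1 :=
      (hxm.trans_le ((min_le_right _ _).trans (min_le_left _ _))).le
    have hxT : ‖x - xs‖ < rT := hxm.trans_le ((min_le_right _ _).trans (min_le_right _ _))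
    have hxρ : ‖x - xs‖ ≤ ρEB := (hxm.trans_le (min_le_left _ _)).le
    obtain ⟨hδM, x', hx'A, hx'K, hx'd⟩ := hEB x hxA' hxρ
    have htri : ‖x' - xs‖ ≤ ‖x' - x‖ + ‖x - xs‖ := by
      simpa [sub_add_sub_cancel] using norm_add_le (x' - x) (x - xs)
    have hchain : ‖x' - xs‖ < m := by
      have h1 : κ * Metric.infDist (G x) K ≤ κ * (M * ‖x - xs‖) :=
        mul_le_mul_of_nonneg_left hδM hκ0.le
      have h2 : (1 + κ*M) * ‖x - xs‖ < (1 + κ*M) * (m / (1 + κ*M)) :=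
        mul_lt_mul_of_pos_left hxn hden0
      have h3 : (1 + κ*M) * (m / (1 + κ*M)) = m := by field_simp
      nlinarith [hx'd]
    refine ⟨hx1, hxT, x', hx'A, hx'K, hx'd, ?_, ?_⟩
    · exact hchain.trans_le ((min_le_right _ _).trans (min_le_right _ _))
    · exact (hchain.trans_le ((min_le_right _ _).trans (min_le_left _ _))).le
  obtain ⟨U₀, hU₀, hopt'⟩ := hopt
  obtain ⟨r₀, hr₀0, hr₀sub⟩ := Metric.mem_nhds_iff.mp hU₀
  constructor
  · -- local exactness
    refine ⟨Lf * κ, by positivity, ?_⟩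
    intro c hc
    obtain ⟨rU, hrU0, hmain⟩ := main r₀ hr₀0
    refine ⟨Metric.ball xs rU, Metric.ball_mem_nhds xs hrU0, ?_⟩
    intro x hxU hxA'
    obtain ⟨hx1, hxT, x', hx'A, hx'K, hx'd, hx'T, hx'1⟩ := hmain x hxU hxA'
    have h1 : Fmax f xs ≤ Fmax f x' :=
      hopt' x' (hr₀sub (Metric.mem_ball.mpr (by rw [dist_eq_norm]; exact hx'T))) hx'A hx'K
    have h2 : Fmax f x' ≤ Fmax f x + Lf * ‖x' - x‖ := hLip' x' x hx'1 hx1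
    have h3 : Lf * ‖x' - x‖ ≤ Lf * κ * Metric.infDist (G x) K := by
      rw [mul_assoc]
      exact mul_le_mul_of_nonneg_left hx'd hLf0
    have h4 : Lf * κ * Metric.infDist (G x) K ≤ c * Metric.infDist (G x) K :=
      mul_le_mul_of_nonneg_right hc (hδnn x)
    rw [hpen_xs c]
    simp only [penaltyFn]
    linarith
  · constructor
    · rintro ⟨ρg, hρg0, Ug, hUg, hgrow⟩
      obtain ⟨rg, hrg0, hrgsub⟩ := Metric.mem_nhds_iff.mp hUg
      refine ⟨Lf * κ + ρg * κ, by positivity, ρg, hρg0, ?_⟩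
      obtain ⟨rU, hrU0, hmain⟩ := main rg hrg0
      refine ⟨Metric.ball xs rU, Metric.ball_mem_nhds xs hrU0, ?_⟩
      intro x hxU hxA'
      obtain ⟨hx1, hxT, x', hx'A, hx'K, hx'd, hx'T, hx'1⟩ := hmain x hxU hxA'
      set δ := Metric.infDist (G x) K with hδdef
      have hg : Fmax f xs + ρg * ‖x' - xs‖ ≤ Fmax f x' :=
        hgrow x' (hrgsub (Metric.mem_ball.mpr (by rw [dist_eq_norm]; exact hx'T))) hx'A hx'K
      have h2 : Fmax f x' ≤ Fmax f x + Lf * ‖x' - x‖ := hLip' x' x hx'1 hx1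
      have h3 : Lf * ‖x' - x‖ ≤ Lf * κ * δ := by
        rw [mul_assoc]
        exact mul_le_mul_of_nonneg_left hx'd hLf0
      have h5 : ‖x - xs‖ - κ * δ ≤ ‖x' - xs‖ := by
        have h6 : ‖x - xs‖ - ‖x' - xs‖ ≤ ‖x' - x‖ := by
          have h7 := norm_sub_norm_le (x - xs) (x' - xs)
          have h8 : (x - xs) - (x' - xs) = -(x' - x) := by abel
          rw [h8, norm_neg] at h7
          exact h7
        linarith [hx'd]
      have h9 : ρg * ‖x - xs‖ ≤ ρg * ‖x' - xs‖ + ρg * κ * δ := by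
        nlinarith [mul_le_mul_of_nonneg_left h5 hρg0.le]
      have hexp : (Lf * κ + ρg * κ) * δ = Lf * κ * δ + ρg * κ * δ := by ring
      rw [hpen_xs]
      simp only [penaltyFn]
      rw [← hδdef]
      linarith [hexp]
    · rintro ⟨c, hc0, ρ, hρ0, U, hU, hgr⟩
      refine ⟨ρ, hρ0, U, hU, ?_⟩
      intro x hxU hxA' hGxK
      have h1 := hgr x hxU hxA'
      rw [hpen_xs] at h1
      simp only [penaltyFn, Metric.infDist_zero_of_mem hGxK, mul_zero, add_zero] at h1
      exact h1
end
end

section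
/- Let x* be a feasible point of the problem (P) and p ∈ {1,…,d+1}. A p-point alternance exists at x* if and only if there exist k₀ ∈ {1,…,p}, i₀ ∈ {k₀+1,…,p}, and vectors V₁,…,V_{k₀} ∈ { ∇ₓf(x*,ω) : ω ∈ W(x*) }, V_{k₀+1},…,V_{i₀} ∈ η(x*), V_{i₀+1},…,V_p ∈ n_A(x*) such that rank([V₁,…,V_p]) = p − 1 and Σ_{i=1}^p βᵢVᵢ = 0 for some βᵢ > 0. Moreover, a collection {V₁,…,V_p} of vectors from these sets is a p-point alternance at x* if and only if rank([V₁,…,V_p]) = p − 1 and Σ_{i=1}^p βᵢVᵢ = 0 for some βᵢ > 0. -/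
open Set Filter Topology Pointwise
open scoped RealInnerProductSpace

noncomputable section

variable {d : ℕ} {W : Type*} [TopologicalSpace W]
variable {Y : Type*} [NormedAddCommGroup Y] [NormedSpace ℝ Y]

/-- The convex conic hull of a set `D`: all finite nonnegative combinations of elements of `D`. -/
def coneHull {V : Type*} [AddCommMonoid V] [Module ℝ V] (S : Set V) : Set V :=
  {x | ∃ (n : ℕ) (c : Fin n → ℝ) (v : Fin n → V),
    (∀ i, 0 ≤ c i) ∧ (∀ i, v i ∈ S) ∧ x = ∑ i, c i • v i}

/-- `Δ_s`: the determinant of the `d × d` matrix whose columns are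
`V₁, …, V_{s−1}, V_{s+1}, …, V_{d+1}` (indices here are 0-based). -/
def altDet {d : ℕ} (V : Fin (d+1) → EuclideanSpace ℝ (Fin d)) (s : Fin (d+1)) : ℝ :=
  Matrix.det (Matrix.of fun i j => V (s.succAbove j) i)

/-- The determinantal conditions in the definition of a `p`-point alternance:
`Δ_s ≠ 0` for `s ≤ p`, consecutive determinants among the first `p` have opposite signs,
and `Δ_s = 0` for `s > p` (0-based indexing). -/
def AltDetConds (d p : ℕ) (V : Fin (d+1) → EuclideanSpace ℝ (Fin d)) : Prop :=
  (∀ s : Fin (d+1), (s : ℕ) < p → altDet V s ≠ 0) ∧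
  (∀ s t : Fin (d+1), (t : ℕ) = (s : ℕ) + 1 → (t : ℕ) < p →
    Real.sign (altDet V t) = - Real.sign (altDet V s)) ∧
  (∀ s : Fin (d+1), p ≤ (s : ℕ) → altDet V s = 0)

/-- Membership conditions on a collection `V₁, …, V_p` (0-based): the first `k₀` vectors lie in
`S₁`, the next `i₀ − k₀` in `S₂` and the remaining ones in `S₃`. -/
def AltMemb {d : ℕ} {p : ℕ} (S₁ S₂ S₃ : Set (EuclideanSpace ℝ (Fin d))) (k₀ i₀ : ℕ)
    (Vp : Fin p → EuclideanSpace ℝ (Fin d)) : Prop :=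
  1 ≤ k₀ ∧ k₀ ≤ i₀ ∧ i₀ ≤ p ∧
  (∀ j : Fin p, (j : ℕ) < k₀ → Vp j ∈ S₁) ∧
  (∀ j : Fin p, k₀ ≤ (j : ℕ) → (j : ℕ) < i₀ → Vp j ∈ S₂) ∧
  (∀ j : Fin p, i₀ ≤ (j : ℕ) → Vp j ∈ S₃)

/-- The collection `Vp = (V₁, …, V_p)` is a `p`-point alternance: it can be extended by vectors
`V_{p+1}, …, V_{d+1} ∈ Z` so that the determinantal alternance conditions hold. -/
def IsAlternance {d : ℕ} (Z : Set (EuclideanSpace ℝ (Fin d))) (p : ℕ) (hp : p ≤ d + 1)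
    (Vp : Fin p → EuclideanSpace ℝ (Fin d)) : Prop :=
  ∃ V : Fin (d+1) → EuclideanSpace ℝ (Fin d),
    (∀ j : Fin p, V (Fin.castLE hp j) = Vp j) ∧
    (∀ j : Fin (d+1), p ≤ (j : ℕ) → V j ∈ Z) ∧ AltDetConds d p V

lemma sign_of_mul_neg {a b : ℝ} (h : a * b < 0) : Real.sign b = - Real.sign a := by
  rcases lt_trichotomy a 0 with ha|ha|ha
  · have hb : 0 < b := by nlinarith
    rw [Real.sign_of_pos hb, Real.sign_of_neg ha]; ring
  · simp [ha] at h
  · have hb : b < 0 := by nlinarith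
    rw [Real.sign_of_neg hb, Real.sign_of_pos ha]

lemma mul_neg_of_sign_eq {a b : ℝ} (ha : a ≠ 0) (h : Real.sign b = - Real.sign a) : a * b < 0 := by
  have hb : b ≠ 0 := by
    intro h0
    rw [h0, Real.sign_zero] at h
    have : Real.sign a = 0 := by linarith
    exact ha (Real.sign_eq_zero_iff.mp this)
  rcases ha.lt_or_gt with ha'|ha' <;> rcases hb.lt_or_gt with hb'|hb'
  · rw [Real.sign_of_neg hb', Real.sign_of_neg ha'] at h; norm_num at h
  · nlinarith
  · nlinarith
  · rw [Real.sign_of_pos hb', Real.sign_of_pos ha'] at h; norm_num at h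

lemma alt_identity {d : ℕ} (V : Fin (d+1) → EuclideanSpace ℝ (Fin d)) :
    ∑ s : Fin (d+1), ((-1:ℝ)^(s:ℕ) * altDet V s) • V s = 0 := by
  ext i
  rw [WithLp.ofLp_sum, Finset.sum_apply]
  classical
  set N : Matrix (Fin (d+1)) (Fin (d+1)) ℝ :=
    Matrix.of fun a s => Fin.cases (V s i) (fun r => V s r) a with hN
  have hdet : N.det = 0 := by
    apply Matrix.det_zero_of_row_eq (i := (0 : Fin (d+1))) (j := Fin.succ i)
      (Fin.succ_ne_zero i).symm
    funext s
    simp [hN]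
  have hexp := Matrix.det_succ_row_zero N
  rw [hdet] at hexp
  have hsub : ∀ j : Fin (d+1), (N.submatrix Fin.succ j.succAbove).det = altDet V j := by
    intro j
    unfold altDet
    congr 1
  have : (0:ℝ) = ∑ j : Fin (d+1), (-1)^(j:ℕ) * V j i * altDet V j := by
    rw [hexp]
    apply Finset.sum_congr rfl
    intro j _
    rw [hsub j]
    simp [hN]
  rw [show ((0 : EuclideanSpace ℝ (Fin d)) i) = (0:ℝ) from rfl]
  rw [this]
  apply Finset.sum_congr rfl
  intro j _
  show ((-1:ℝ)^(j:ℕ) * altDet V j) • V j i = _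
  simp [smul_eq_mul]
  ring

-- proportionality of kernel vectors
lemma prop_general {n : ℕ} {M : Type*} [AddCommGroup M] [Module ℝ M]
    (V : Fin (n+1) → M)
    (hind : LinearIndependent ℝ (fun r : Fin n => V r.succ))
    (u w : Fin (n+1) → ℝ) (hu : ∑ s, u s • V s = 0) (hw : ∑ s, w s • V s = 0)
    (hu0 : u 0 ≠ 0) : w = (w 0 / u 0) • u := by
  set c := w 0 / u 0 with hc
  set γ : Fin (n+1) → ℝ := w - c • u with hγ
  have hγ0 : γ 0 = 0 := by
    simp only [hγ, Pi.sub_apply, Pi.smul_apply, smul_eq_mul, hc]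
    field_simp
    ring
  have hγsum : ∑ s, γ s • V s = 0 := by
    have : ∑ s, γ s • V s = (∑ s, w s • V s) - c • (∑ s, u s • V s) := by
      rw [Finset.smul_sum, ← Finset.sum_sub_distrib]
      apply Finset.sum_congr rfl
      intro s _
      simp [hγ, sub_smul, smul_smul]
    rw [this, hu, hw, smul_zero, sub_zero]
  rw [Fin.sum_univ_succ, hγ0, zero_smul, zero_add] at hγsum
  have hz : ∀ r : Fin n, γ r.succ = 0 :=
    Fintype.linearIndependent_iff.mp hind (fun r => γ r.succ) hγsum
  have : γ = 0 := funext (Fin.cases hγ0 hz)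
  have := sub_eq_zero.mp (hγ ▸ this)
  rw [← this]

lemma ind_of_uniq {n : ℕ} {M : Type*} [AddCommGroup M] [Module ℝ M]
    (V : Fin (n+1) → M) (β : Fin (n+1) → ℝ) (hβ0 : β 0 ≠ 0)
    (huniq : ∀ γ : Fin (n+1) → ℝ, ∑ s, γ s • V s = 0 → ∃ c : ℝ, γ = c • β) :
    LinearIndependent ℝ (fun r : Fin n => V r.succ) := by
  rw [Fintype.linearIndependent_iff]
  intro g hg r
  set γ : Fin (n+1) → ℝ := Fin.cases 0 g with hγ
  have hγsum : ∑ s, γ s • V s = 0 := by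
    rw [Fin.sum_univ_succ]
    simp only [hγ, Fin.cases_zero, Fin.cases_succ, zero_smul, zero_add]
    exact hg
  obtain ⟨c, hcγ⟩ := huniq γ hγsum
  have h0 : (0:ℝ) = c * β 0 := by
    have := congrFun hcγ 0
    simpa [hγ] using this
  have hc : c = 0 := by
    rcases mul_eq_zero.mp h0.symm with h|h
    · exact h
    · exact absurd h hβ0
  have := congrFun hcγ r.succ
  simpa [hγ, hc] using this

-- proportionality of kernel vectors
lemma mulVecLin_eq_zero_iff {d n : ℕ} (Vp : Fin n → EuclideanSpace ℝ (Fin d)) (γ : Fin n → ℝ) :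
    (Matrix.of fun i j => Vp j i).mulVecLin γ = 0 ↔ ∑ s, γ s • Vp s = 0 := by
  have h1 : ∀ i, (Matrix.of fun i j => Vp j i).mulVecLin γ i = ∑ s, γ s * Vp s i := by
    intro i
    simp [Matrix.mulVecLin_apply, Matrix.mulVec, dotProduct, mul_comm]
  have h2 : ∀ i : Fin d, (∑ s, γ s • Vp s) i = ∑ s, γ s * Vp s i := by
    intro i
    rw [WithLp.ofLp_sum, Finset.sum_apply]
    rfl
  constructor
  · intro h
    ext i
    rw [h2 i, ← h1 i, h]
    rfl
  · intro h
    funext i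
    rw [h1 i, ← h2 i, h]
    rfl

lemma det_ne_zero_iff_cols {d : ℕ} (V : Fin d → EuclideanSpace ℝ (Fin d)) :
    Matrix.det (Matrix.of fun i j => V j i) ≠ 0 ↔ LinearIndependent ℝ V := by
  rw [← isUnit_iff_ne_zero, ← Matrix.isUnit_iff_isUnit_det,
    ← Matrix.linearIndependent_cols_iff_isUnit]
  exact LinearMap.linearIndependent_iff (WithLp.linearEquiv 2 ℝ (Fin d → ℝ)).toLinearMap (LinearEquiv.ker _)

lemma ker_eq_span {d q : ℕ} (Vp : Fin (q+1) → EuclideanSpace ℝ (Fin d))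
    (β : Fin (q+1) → ℝ) (hβ0 : β 0 ≠ 0) (hβsum : ∑ s, β s • Vp s = 0)
    (hind : LinearIndependent ℝ (fun j : Fin q => Vp j.succ)) :
    LinearMap.ker (Matrix.of fun i j => Vp j i).mulVecLin = Submodule.span ℝ {β} := by
  apply le_antisymm
  · intro γ hγ
    rw [LinearMap.mem_ker, mulVecLin_eq_zero_iff] at hγ
    have := prop_general Vp hind β γ hβsum hγ hβ0
    rw [Submodule.mem_span_singleton]
    exact ⟨γ 0 / β 0, this.symm⟩
  · rw [Submodule.span_singleton_le_iff_mem, LinearMap.mem_ker, mulVecLin_eq_zero_iff]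
    exact hβsum

lemma rank_eq_of_ker {d q : ℕ} (Vp : Fin (q+1) → EuclideanSpace ℝ (Fin d))
    (β : Fin (q+1) → ℝ) (hβ0 : β 0 ≠ 0) (hβsum : ∑ s, β s • Vp s = 0)
    (hind : LinearIndependent ℝ (fun j : Fin q => Vp j.succ)) :
    (Matrix.of fun i j => Vp j i).rank = q := by
  have hβne : β ≠ 0 := fun h => hβ0 (by rw [h]; rfl)
  have hker := ker_eq_span Vp β hβ0 hβsum hind
  have hrn := LinearMap.finrank_range_add_finrank_ker (Matrix.of fun i j => Vp j i).mulVecLin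
  rw [hker, finrank_span_singleton hβne, Module.finrank_fintype_fun_eq_card,
    Fintype.card_fin] at hrn
  have : (Matrix.of fun i j => Vp j i).rank
      = Module.finrank ℝ (LinearMap.range (Matrix.of fun i j => Vp j i).mulVecLin) := rfl
  omega

lemma ind_of_rank {d q : ℕ} (Vp : Fin (q+1) → EuclideanSpace ℝ (Fin d))
    (β : Fin (q+1) → ℝ) (hβ0 : β 0 ≠ 0) (hβsum : ∑ s, β s • Vp s = 0)
    (hrank : (Matrix.of fun i j => Vp j i).rank = q) :
    LinearIndependent ℝ (fun j : Fin q => Vp j.succ) := by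
  have hβne : β ≠ 0 := fun h => hβ0 (by rw [h]; rfl)
  have hβker : β ∈ LinearMap.ker (Matrix.of fun i j => Vp j i).mulVecLin := by
    rw [LinearMap.mem_ker, mulVecLin_eq_zero_iff]; exact hβsum
  have hrn := LinearMap.finrank_range_add_finrank_ker (Matrix.of fun i j => Vp j i).mulVecLin
  rw [Module.finrank_fintype_fun_eq_card, Fintype.card_fin] at hrn
  have hR : (Matrix.of fun i j => Vp j i).rank
      = Module.finrank ℝ (LinearMap.range (Matrix.of fun i j => Vp j i).mulVecLin) := rfl
  have hkd : Module.finrank ℝ (LinearMap.ker (Matrix.of fun i j => Vp j i).mulVecLin) = 1 := by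
    omega
  have hle : Submodule.span ℝ {β} ≤ LinearMap.ker (Matrix.of fun i j => Vp j i).mulVecLin := by
    rw [Submodule.span_singleton_le_iff_mem]; exact hβker
  have hker : Submodule.span ℝ {β} = LinearMap.ker (Matrix.of fun i j => Vp j i).mulVecLin := by
    apply Submodule.eq_of_le_of_finrank_le hle
    rw [hkd, finrank_span_singleton hβne]
  apply ind_of_uniq Vp β hβ0
  intro γ hγ
  have : γ ∈ Submodule.span ℝ ({β} : Set (Fin (q+1) → ℝ)) := by
    rw [hker, LinearMap.mem_ker, mulVecLin_eq_zero_iff]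
    exact hγ
  obtain ⟨c, hc⟩ := Submodule.mem_span_singleton.mp this
  exact ⟨c, hc.symm⟩

lemma sum_castLE {d q : ℕ} (hp : q+1 ≤ d+1) {M : Type*} [AddCommGroup M] [Module ℝ M]
    (g : Fin (d+1) → M) (hg : ∀ s : Fin (d+1), ¬((s:ℕ) < q+1) → g s = 0) :
    ∑ j : Fin (q+1), g (Fin.castLE hp j) = ∑ s, g s := by
  classical
  rw [show ∑ j : Fin (q+1), g (Fin.castLE hp j) = ∑ j, g (Fin.castLEEmb hp j) from rfl,
    ← Finset.sum_map Finset.univ (Fin.castLEEmb hp) g]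
  apply Finset.sum_subset (Finset.subset_univ _)
  intro s _ hs
  apply hg
  intro hlt
  apply hs
  rw [Finset.mem_map]
  exact ⟨⟨(s:ℕ), hlt⟩, Finset.mem_univ _, Fin.ext (by simp)⟩

set_option maxHeartbeats 1000000 in
lemma main_equiv {d q : ℕ} (hp : q+1 ≤ d+1) (z : Fin d → EuclideanSpace ℝ (Fin d))
    (hz : LinearIndependent ℝ z)
    (Vp : Fin (q+1) → EuclideanSpace ℝ (Fin d)) :
    IsAlternance (Set.range z) (q+1) hp Vp ↔
      ((Matrix.of fun (i : Fin d) (j : Fin (q+1)) => Vp j i).rank = q ∧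
        ∃ β : Fin (q+1) → ℝ, (∀ i, 0 < β i) ∧ ∑ i, β i • Vp i = 0) := by
  constructor
  · rintro ⟨V, hcast, -, h1, h2, h3⟩
    have h00 : altDet V 0 ≠ 0 := h1 0 (by simp)
    have hdet0 : altDet V 0 = Matrix.det (Matrix.of fun i (j : Fin d) => V j.succ i) := by
      unfold altDet
      simp only [Fin.succAbove_zero]
    have hindV : LinearIndependent ℝ (fun r : Fin d => V r.succ) := by
      rw [← det_ne_zero_iff_cols]
      rw [← hdet0]
      exact h00
    set w : Fin (d+1) → ℝ := fun s => (-1:ℝ)^(s:ℕ) * altDet V s with hw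
    have hwsum : ∑ s, w s • V s = 0 := alt_identity V
    set ε : ℝ := Real.sign (altDet V 0) with hε
    have hεsq : ε * ε = 1 := by
      rcases h00.lt_or_gt with h|h
      · rw [hε, Real.sign_of_neg h]; norm_num
      · rw [hε, Real.sign_of_pos h]; norm_num
    have key : ∀ m : ℕ, ∀ hm : m < q+1, 0 < ε * w ⟨m, lt_of_lt_of_le hm hp⟩ := by
      intro m
      induction m with
      | zero =>
        intro hm
        have : (⟨0, lt_of_lt_of_le hm hp⟩ : Fin (d+1)) = 0 := rfl
        rw [this]
        have hw0 : w 0 = altDet V 0 := by simp [hw]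
        rw [hw0, hε]
        rcases h00.lt_or_gt with h|h
        · rw [Real.sign_of_neg h]; linarith
        · rw [Real.sign_of_pos h]; linarith
      | succ m ih =>
        intro hm
        have hmlt : m < q+1 := by omega
        have hmd : m < d + 1 := by omega
        have hm1d : m + 1 < d + 1 := by omega
        set sm : Fin (d+1) := ⟨m, hmd⟩ with hsm
        set st : Fin (d+1) := ⟨m+1, hm1d⟩ with hst
        have hsign := h2 sm st rfl (show m+1 < q+1 from hm)
        have hΔm : altDet V sm ≠ 0 := h1 sm (by simpa using hmlt)
        have hprod : altDet V sm * altDet V st < 0 := mul_neg_of_sign_eq hΔm hsign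
        have hihm : 0 < ε * w sm := ih hmlt
        have hw1 : w sm = (-1:ℝ)^m * altDet V sm := rfl
        have hw2 : w st = (-1:ℝ)^(m+1) * altDet V st := rfl
        have hneg : ((-1:ℝ)^m) * ((-1:ℝ)^(m+1)) = -1 := by
          rcases Nat.even_or_odd m with h|h <;>
            simp [pow_succ, h.neg_one_pow]
        have hab : (ε * w sm) * (ε * w st) = - (altDet V sm * altDet V st) := by
          calc (ε * w sm) * (ε * w st)
              = (ε*ε) * ((((-1:ℝ)^m) * ((-1:ℝ)^(m+1))) * (altDet V sm * altDet V st)) := by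
                rw [hw1, hw2]; ring
            _ = - (altDet V sm * altDet V st) := by rw [hεsq, hneg]; ring
        show 0 < ε * w st
        nlinarith [hab, hprod, hihm]
    set β : Fin (q+1) → ℝ := fun j => ε * w (Fin.castLE hp j) with hβ
    have hβpos : ∀ j, 0 < β j := by
      intro j
      have := key (j:ℕ) j.isLt
      convert this using 3
      rfl
    have hzero : ∀ s : Fin (d+1), ¬((s:ℕ) < q+1) → w s • V s = 0 := by
      intro s hs
      have : altDet V s = 0 := h3 s (by omega)
      simp [hw, this]
    have hβsum : ∑ j, β j • Vp j = 0 := by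
      have step : ∀ j, β j • Vp j = ε • (w (Fin.castLE hp j) • V (Fin.castLE hp j)) := by
        intro j
        rw [hcast j]
        rw [hβ, mul_smul]
      calc ∑ j, β j • Vp j = ∑ j, ε • (w (Fin.castLE hp j) • V (Fin.castLE hp j)) :=
            Finset.sum_congr rfl (fun j _ => step j)
        _ = ε • ∑ j, w (Fin.castLE hp j) • V (Fin.castLE hp j) := (Finset.smul_sum).symm
        _ = ε • ∑ s, w s • V s := by rw [sum_castLE hp _ hzero]
        _ = 0 := by rw [hwsum, smul_zero]
    have hqd : q ≤ d := by omega
    have hindp : LinearIndependent ℝ (fun j : Fin q => Vp j.succ) := by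
      have hfeq : (fun j : Fin q => Vp j.succ)
          = (fun r : Fin d => V r.succ) ∘ (fun j : Fin q => (⟨(j:ℕ), by omega⟩ : Fin d)) := by
        funext j
        show Vp j.succ = V (Fin.succ ⟨(j:ℕ), by omega⟩)
        rw [← hcast j.succ]
        congr 1
      rw [hfeq]
      exact hindV.comp _ (fun a b hab => Fin.ext (by simpa [Fin.ext_iff] using hab))
    refine ⟨rank_eq_of_ker Vp β (hβpos 0).ne' hβsum hindp, β, hβpos, hβsum⟩
  · rintro ⟨hrank, β, hβpos, hβsum⟩
    have hβ0 : β 0 ≠ 0 := (hβpos 0).ne'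
    have hind : LinearIndependent ℝ (fun j : Fin q => Vp j.succ) :=
      ind_of_rank Vp β hβ0 hβsum hrank
    have hqd : q ≤ d := by omega
    set g : Fin q → EuclideanSpace ℝ (Fin d) := fun j => Vp j.succ with hg
    set sset : Set (EuclideanSpace ℝ (Fin d)) := Set.range g with hss
    have hsetind : LinearIndependent ℝ ((↑) : sset → EuclideanSpace ℝ (Fin d)) :=
      (linearIndepOn_id_range_iff hind.injective).mpr hind
    have hzspan : Submodule.span ℝ (Set.range z) = ⊤ :=
      hz.span_eq_top_of_card_eq_finrank' (by simp)
    obtain ⟨b, hbt, hsb, htspan, hbind⟩ :=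
      exists_linearIndepOn_id_extension hsetind (Set.subset_union_left (t := Set.range z))
    have hbspan : Submodule.span ℝ b = ⊤ := by
      rw [← top_le_iff]
      calc (⊤ : Submodule ℝ (EuclideanSpace ℝ (Fin d))) = Submodule.span ℝ (Set.range z) :=
            hzspan.symm
        _ ≤ Submodule.span ℝ (sset ∪ Set.range z) := Submodule.span_mono Set.subset_union_right
        _ ≤ Submodule.span ℝ b := Submodule.span_le.mpr htspan
    have hbfin : b.Finite := hbind.setFinite
    haveI := hbfin.fintype
    have hbcard : b.ncard = d := by
      have h1 := finrank_span_set_eq_card hbind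
      rw [hbspan, finrank_top, finrank_euclideanSpace_fin] at h1
      rw [Set.ncard_eq_toFinset_card']
      exact h1.symm
    have hsscard : sset.ncard = q := by
      rw [hss, ← Set.image_univ, Set.ncard_image_of_injective _ hind.injective,
        Set.ncard_univ, Nat.card_eq_fintype_card, Fintype.card_fin]
    have hssfin : sset.Finite := Set.finite_range g
    have hdfin : (b \ sset).Finite := hbfin.diff
    have hdcard : (b \ sset).ncard = d - q := by
      rw [Set.ncard_diff hsb hssfin, hbcard, hsscard]
    have hcardF : hdfin.toFinset.card = d - q := by
      rw [← Set.ncard_eq_toFinset_card _ hdfin, hdcard]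
    set e0 := Finset.equivFinOfCardEq hcardF with he0
    set e : Fin (d - q) → EuclideanSpace ℝ (Fin d) := fun k => ((e0.symm k : hdfin.toFinset) : EuclideanSpace ℝ (Fin d)) with he
    have hemem : ∀ k, e k ∈ b \ sset := by
      intro k
      have h2 := (e0.symm k).2
      rwa [Set.Finite.mem_toFinset] at h2
    have heinj : Function.Injective e := by
      intro k l hkl
      have h2 : e0.symm k = e0.symm l := Subtype.ext hkl
      simpa using congrArg e0 h2
    set Vx : Fin (d+1) → EuclideanSpace ℝ (Fin d) := fun s =>
      if h : (s:ℕ) < q+1 then Vp ⟨(s:ℕ), h⟩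
      else e ⟨(s:ℕ) - (q+1), by have := s.isLt; omega⟩ with hVx
    have hcast : ∀ j : Fin (q+1), Vx (Fin.castLE hp j) = Vp j := by
      intro j
      rw [hVx]
      simp only [Fin.coe_castLE]
      rw [dif_pos j.isLt]
    have hZmem : ∀ s : Fin (d+1), q+1 ≤ (s:ℕ) → Vx s ∈ Set.range z := by
      intro s hs
      rw [hVx]
      dsimp only
      rw [dif_neg (by omega)]
      have hmem := hemem ⟨(s:ℕ) - (q+1), by have := s.isLt; omega⟩
      rcases hbt hmem.1 with h|h
      · exact absurd h hmem.2
      · exact h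
    have hsuccval : ∀ r : Fin d, ((r.succ : Fin (d+1)) : ℕ) = (r:ℕ) + 1 := fun r => rfl
    have hmemb : ∀ r : Fin d, Vx r.succ ∈ b := by
      intro r
      have hsv := hsuccval r
      rw [hVx]
      dsimp only
      by_cases h : ((r.succ : Fin (d+1)) : ℕ) < q+1
      · rw [dif_pos h]
        apply hsb
        rw [hss]
        exact ⟨⟨(r:ℕ), by omega⟩, congrArg Vp (Fin.ext (by simp))⟩
      · rw [dif_neg h]
        exact (hemem _).1
    have hVpg : ∀ (r : Fin d) (h : ((r.succ : Fin (d+1)) : ℕ) < q+1),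
        Vp ⟨((r.succ : Fin (d+1)) : ℕ), h⟩ = g ⟨(r:ℕ), by have hsv := hsuccval r; omega⟩ := by
      intro r h
      rw [hg]
      exact congrArg Vp (Fin.ext (by simp))
    have hVind : LinearIndependent ℝ (fun r : Fin d => Vx r.succ) := by
      have hrepr : (fun r : Fin d => Vx r.succ)
          = ((↑) : b → EuclideanSpace ℝ (Fin d)) ∘ (fun r => (⟨Vx r.succ, hmemb r⟩ : b)) := rfl
      rw [hrepr]
      apply hbind.comp
      intro r₁ r₂ h12
      have hval : Vx r₁.succ = Vx r₂.succ := congrArg Subtype.val h12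
      rw [hVx] at hval
      dsimp only at hval
      by_cases h1 : ((r₁.succ : Fin (d+1)) : ℕ) < q+1 <;>
        by_cases h2 : ((r₂.succ : Fin (d+1)) : ℕ) < q+1
      · rw [dif_pos h1, dif_pos h2, hVpg r₁ h1, hVpg r₂ h2] at hval
        have := hind.injective hval
        rw [Fin.mk.injEq] at this
        exact Fin.ext this
      · rw [dif_pos h1, dif_neg h2, hVpg r₁ h1] at hval
        have hmem : g ⟨(r₁:ℕ), by have hsv := hsuccval r₁; omega⟩ ∈ sset :=
          Set.mem_range_self _
        rw [hval] at hmem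
        exact absurd hmem (hemem _).2
      · rw [dif_neg h1, dif_pos h2, hVpg r₂ h2] at hval
        have hmem : g ⟨(r₂:ℕ), by have hsv := hsuccval r₂; omega⟩ ∈ sset :=
          Set.mem_range_self _
        rw [← hval] at hmem
        exact absurd hmem (hemem _).2
      · rw [dif_neg h1, dif_neg h2] at hval
        have := heinj hval
        rw [Fin.mk.injEq] at this
        have hr1 := hsuccval r₁
        have hr2 := hsuccval r₂
        exact Fin.ext (by omega)
    have hΔ0 : altDet Vx 0 ≠ 0 := by
      have hdet0 : altDet Vx 0 = Matrix.det (Matrix.of fun i (j : Fin d) => Vx j.succ i) := by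
        unfold altDet
        simp only [Fin.succAbove_zero]
      rw [hdet0]
      exact (det_ne_zero_iff_cols _).mpr hVind
    set u : Fin (d+1) → ℝ := fun s => if h : (s:ℕ) < q+1 then β ⟨(s:ℕ), h⟩ else 0 with hu
    have husum : ∑ s, u s • Vx s = 0 := by
      rw [← sum_castLE hp (fun s => u s • Vx s)
        (fun s hs => by rw [hu]; dsimp only; rw [dif_neg hs, zero_smul])]
      calc ∑ j : Fin (q+1), u (Fin.castLE hp j) • Vx (Fin.castLE hp j)
          = ∑ j, β j • Vp j := by
            apply Finset.sum_congr rfl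
            intro j _
            rw [hcast j, hu]
            dsimp only
            rw [dif_pos (by simpa using j.isLt : ((Fin.castLE hp j : Fin (d+1)) : ℕ) < q+1)]
            congr 1
        _ = 0 := hβsum
    set w : Fin (d+1) → ℝ := fun s => (-1:ℝ)^(s:ℕ) * altDet Vx s with hw
    have hwsum : ∑ s, w s • Vx s = 0 := alt_identity Vx
    have hu0pos : 0 < u 0 := by
      rw [hu]
      dsimp only
      rw [dif_pos (by simp : ((0 : Fin (d+1)) : ℕ) < q+1)]
      exact hβpos _
    have hu0 : u 0 ≠ 0 := hu0pos.ne'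
    have hprop := prop_general Vx hVind u w husum hwsum hu0
    set c : ℝ := w 0 / u 0 with hc
    have hw0 : w 0 = altDet Vx 0 := by rw [hw]; dsimp only; norm_num
    have hcne : c ≠ 0 := by
      rw [hc, hw0]
      exact div_ne_zero hΔ0 hu0
    have hwc : ∀ s, w s = c * u s := by
      intro s
      have := congrFun hprop s
      simpa using this
    have hsq : ∀ m : ℕ, ((-1:ℝ)^m) * ((-1:ℝ)^m) = 1 := by
      intro m
      rw [← mul_pow]
      norm_num
    have hnegpow : ∀ m : ℕ, ((-1:ℝ)^m) * ((-1:ℝ)^(m+1)) = -1 := by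
      intro m
      rw [pow_succ, ← mul_assoc, hsq]
      ring
    have cond1 : ∀ s : Fin (d+1), (s:ℕ) < q+1 → altDet Vx s ≠ 0 := by
      intro s hs hcontra
      have hws : w s = 0 := by rw [hw]; dsimp only; rw [hcontra, mul_zero]
      rw [hwc s, hu] at hws
      dsimp only at hws
      rw [dif_pos hs] at hws
      rcases mul_eq_zero.mp hws with h|h
      · exact hcne h
      · exact (hβpos _).ne' h
    have cond3 : ∀ s : Fin (d+1), q+1 ≤ (s:ℕ) → altDet Vx s = 0 := by
      intro s hs
      have hws : w s = 0 := by
        rw [hwc s, hu]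
        dsimp only
        rw [dif_neg (by omega), mul_zero]
      rw [hw] at hws
      dsimp only at hws
      rcases mul_eq_zero.mp hws with h|h
      · exact absurd h (by positivity)
      · exact h
    have hΔw : ∀ s : Fin (d+1), altDet Vx s = ((-1:ℝ)^(s:ℕ)) * w s := by
      intro s
      rw [hw]
      dsimp only
      rw [← mul_assoc, hsq, one_mul]
    have cond2 : ∀ s t : Fin (d+1), (t:ℕ) = (s:ℕ) + 1 → (t:ℕ) < q+1 →
        Real.sign (altDet Vx t) = - Real.sign (altDet Vx s) := by
      intro s t ht htlt
      have hslt : (s:ℕ) < q+1 := by omega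
      apply sign_of_mul_neg
      have hws : w s = c * β ⟨(s:ℕ), hslt⟩ := by
        rw [hwc s, hu]
        dsimp only
        rw [dif_pos hslt]
      have hwt : w t = c * β ⟨(t:ℕ), htlt⟩ := by
        rw [hwc t, hu]
        dsimp only
        rw [dif_pos htlt]
      have hcalc : altDet Vx s * altDet Vx t
          = - ((c * β ⟨(s:ℕ), hslt⟩) * (c * β ⟨(t:ℕ), htlt⟩)) := by
        rw [hΔw s, hΔw t, hws, hwt]
        have hpow : ((-1:ℝ))^((t:ℕ)) = ((-1:ℝ))^((s:ℕ)+1) := by rw [ht]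
        rw [hpow]
        calc ((-1:ℝ)^(s:ℕ) * (c * β ⟨(s:ℕ), hslt⟩)) * ((-1:ℝ)^((s:ℕ)+1) * (c * β ⟨(t:ℕ), htlt⟩))
            = (((-1:ℝ)^(s:ℕ)) * ((-1:ℝ)^((s:ℕ)+1)))
              * ((c * β ⟨(s:ℕ), hslt⟩) * (c * β ⟨(t:ℕ), htlt⟩)) := by ring
          _ = - ((c * β ⟨(s:ℕ), hslt⟩) * (c * β ⟨(t:ℕ), htlt⟩)) := by
              rw [hnegpow]; ring
      rw [hcalc]
      have hpos : 0 < (c * β ⟨(s:ℕ), hslt⟩) * (c * β ⟨(t:ℕ), htlt⟩) := by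
        have h1 := hβpos ⟨(s:ℕ), hslt⟩
        have h2 := hβpos ⟨(t:ℕ), htlt⟩
        have h3 := mul_self_pos.mpr hcne
        have h4 : (c * β ⟨(s:ℕ), hslt⟩) * (c * β ⟨(t:ℕ), htlt⟩)
            = (c*c) * (β ⟨(s:ℕ), hslt⟩ * β ⟨(t:ℕ), htlt⟩) := by ring
        rw [h4]
        exact mul_pos h3 (mul_pos h1 h2)
      linarith
    exact ⟨Vx, hcast, hZmem, cond1, cond2, cond3⟩



/-!
Statement 11: a p-point alternance exists at a feasible point x* iff a p-point cadre with
positive cadre multipliers exists (vectors from the gradient set, η(x*) and n_A(x*) with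
rank([V₁,…,V_p]) = p − 1 and Σ βᵢ Vᵢ = 0 for some βᵢ > 0); moreover a collection of such
vectors is a p-point alternance iff the rank condition and the positive combination hold.
-/
theorem alternance_iff_cadre_with_positive_multipliers
    {d : ℕ} {W : Type*} [TopologicalSpace W] [CompactSpace W] [T2Space W] [Nonempty W]
    {Y : Type*} [NormedAddCommGroup Y] [NormedSpace ℝ Y] [CompleteSpace Y]
    (A : Set (EuclideanSpace ℝ (Fin d))) (K : Set Y)
    (G : EuclideanSpace ℝ (Fin d) → Y) (f : EuclideanSpace ℝ (Fin d) → W → ℝ)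
    (hAne : A.Nonempty) (hAcl : IsClosed A) (hAconv : Convex ℝ A)
    (hKne : K.Nonempty) (hKcl : IsClosed K) (hKconv : Convex ℝ K)
    (hKcone : ∀ (c : ℝ), 0 ≤ c → ∀ y ∈ K, c • y ∈ K)
    (hG : ContDiff ℝ 1 G)
    (hfdiff : ∀ ω, Differentiable ℝ (fun x => f x ω))
    (hfc : Continuous fun p : EuclideanSpace ℝ (Fin d) × W => f p.1 p.2)
    (hfg : Continuous fun p : EuclideanSpace ℝ (Fin d) × W => gradient (fun z => f z p.2) p.1)
    (xs : EuclideanSpace ℝ (Fin d)) (hxA : xs ∈ A) (hxK : G xs ∈ K)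
    (Z : Set (EuclideanSpace ℝ (Fin d)))
    (hZ : ∃ z : Fin d → EuclideanSpace ℝ (Fin d), LinearIndependent ℝ z ∧ Z = Set.range z)
    (η nA : Set (EuclideanSpace ℝ (Fin d)))
    (hηsub : η ⊆ calN G K xs) (hη : coneHull η = calN G K xs)
    (hnAsub : nA ⊆ normalCone A xs) (hnA : coneHull nA = normalCone A xs)
    (p : ℕ) (hp1 : 1 ≤ p) (hp : p ≤ d + 1) :
    ((∃ (k₀ i₀ : ℕ) (Vp : Fin p → EuclideanSpace ℝ (Fin d)),
        AltMemb (activeGrads f xs) η nA k₀ i₀ Vp ∧ IsAlternance Z p hp Vp) ↔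
      (∃ (k₀ i₀ : ℕ) (Vp : Fin p → EuclideanSpace ℝ (Fin d)) (β : Fin p → ℝ),
        AltMemb (activeGrads f xs) η nA k₀ i₀ Vp ∧
        (Matrix.of fun (i : Fin d) (j : Fin p) => Vp j i).rank = p - 1 ∧
        (∀ i, 0 < β i) ∧ ∑ i, β i • Vp i = 0)) ∧
    (∀ (k₀ i₀ : ℕ) (Vp : Fin p → EuclideanSpace ℝ (Fin d)),
      AltMemb (activeGrads f xs) η nA k₀ i₀ Vp →
      (IsAlternance Z p hp Vp ↔
        ((Matrix.of fun (i : Fin d) (j : Fin p) => Vp j i).rank = p - 1 ∧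
          ∃ β : Fin p → ℝ, (∀ i, 0 < β i) ∧ ∑ i, β i • Vp i = 0))) := by
  obtain ⟨q, rfl⟩ : ∃ q, p = q + 1 := ⟨p - 1, by omega⟩
  obtain ⟨z, hzind, rfl⟩ := hZ
  have hmain : ∀ Vp : Fin (q+1) → EuclideanSpace ℝ (Fin d),
      IsAlternance (Set.range z) (q+1) hp Vp ↔
      ((Matrix.of fun (i : Fin d) (j : Fin (q+1)) => Vp j i).rank = q ∧
        ∃ β : Fin (q+1) → ℝ, (∀ i, 0 < β i) ∧ ∑ i, β i • Vp i = 0) :=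
    fun Vp => main_equiv hp z hzind Vp
  constructor
  · constructor
    · rintro ⟨k₀, i₀, Vp, hmemb, halt⟩
      obtain ⟨hrank, β, h1, h2⟩ := (hmain Vp).mp halt
      exact ⟨k₀, i₀, Vp, β, hmemb, by simpa using hrank, h1, h2⟩
    · rintro ⟨k₀, i₀, Vp, β, hmemb, hrank, h1, h2⟩
      exact ⟨k₀, i₀, Vp, hmemb, (hmain Vp).mpr ⟨by simpa using hrank, β, h1, h2⟩⟩
  · intro k₀ i₀ Vp hmemb
    rw [hmain Vp]
    constructor
    · rintro ⟨hrank, β, h1, h2⟩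
      exact ⟨by simpa using hrank, β, h1, h2⟩
    · rintro ⟨hrank, β, h1, h2⟩
      exact ⟨by simpa using hrank, β, h1, h2⟩
end
end

section
/- Let x₁,…,x_k ∈ ℝ^d be given vectors, x = Σ_{i=1}^k βᵢxᵢ for some βᵢ > 0, and S = co{ x₁,…,x_k, −x }. Then there exists r > 0 such that { z = Σ_{i=1}^k αᵢxᵢ : Σ_{i=1}^k |αᵢ| < r } ⊂ S. -/
/-!
Statement 12: let x₁,…,x_k ∈ ℝ^d, x = Σ βᵢxᵢ with βᵢ > 0 and
S = co{x₁,…,x_k, −x}. Then there exists r > 0 such that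
{ z = Σ αᵢxᵢ : Σ |αᵢ| < r } ⊆ S.
-/

open Set

theorem small_l1_combinations_in_simplex
    {d k : ℕ} (x : Fin k → EuclideanSpace ℝ (Fin d)) (β : Fin k → ℝ)
    (hβ : ∀ i, 0 < β i) :
    ∃ r > (0:ℝ), ∀ α : Fin k → ℝ, ∑ i, |α i| < r →
      ∑ i, α i • x i ∈
        convexHull ℝ (Set.range x ∪ {-(∑ i, β i • x i)}) := by
  classical
  set B := ∑ i, β i with hB
  set c := ∑ i, (β i)⁻¹ with hc
  have hB0 : 0 ≤ B := Finset.sum_nonneg fun i _ => (hβ i).le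
  have hc0 : 0 ≤ c := Finset.sum_nonneg fun i _ => inv_nonneg.2 (hβ i).le
  have hD : (0:ℝ) < 2 + 2*c*(1+B) := by positivity
  refine ⟨(2 + 2*c*(1+B))⁻¹, by positivity, ?_⟩
  intro α hα
  have hxS : ∀ i, x i ∈ convexHull ℝ (Set.range x ∪ {-(∑ i, β i • x i)}) :=
    fun i => subset_convexHull ℝ _ (Or.inl ⟨i, rfl⟩)
  have hnS : -(∑ i, β i • x i) ∈ convexHull ℝ (Set.range x ∪ {-(∑ i, β i • x i)}) :=
    subset_convexHull ℝ _ (Or.inr rfl)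
  set s := ∑ i, α i with hs
  set u : ℝ := (1 - s)/(1+B) with hu
  have hαsum : s ≤ ∑ i, |α i| := Finset.sum_le_sum fun i _ => le_abs_self _
  have hr12 : (2 + 2*c*(1+B))⁻¹ ≤ 1/2 := by
    rw [inv_le_iff_one_le_mul₀ hD]
    nlinarith
  have hs12 : s < 1/2 := lt_of_le_of_lt hαsum (lt_of_lt_of_le hα hr12)
  have h1B : (0:ℝ) < 1 + B := by linarith
  have hu12 : (1/2)/(1+B) ≤ u := by
    rw [hu, div_le_div_iff₀ h1B h1B]
    nlinarith
  have hu0 : 0 ≤ u := le_trans (by positivity) hu12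
  have hu1B : u * (1 + B) = 1 - s := div_mul_cancel₀ _ h1B.ne'
  have hw : ∀ i, 0 ≤ α i + u * β i := by
    intro i
    have hci : (β i)⁻¹ ≤ c := Finset.single_le_sum
      (f := fun j => (β j)⁻¹) (fun j _ => inv_nonneg.2 (hβ j).le) (Finset.mem_univ i)
    have hbc : 1 ≤ β i * c := by
      rw [← mul_inv_cancel₀ (hβ i).ne']
      exact mul_le_mul_of_nonneg_left hci (hβ i).le
    -- r ≤ β i / (2*(1+B))
    have hrb : (2 + 2*c*(1+B))⁻¹ ≤ β i / (2*(1+B)) := by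
      rw [inv_le_iff_one_le_mul₀ hD, div_mul_eq_mul_div, le_div_iff₀ (by positivity)]
      nlinarith [(hβ i).le]
    have hub : β i / (2*(1+B)) ≤ u * β i := by
      rw [div_le_iff₀ (by positivity)]
      nlinarith [hu1B, hs12, (hβ i).le]
    have hαi : -α i ≤ ∑ i, |α i| := le_trans (neg_le_abs _)
      (Finset.single_le_sum (f := fun j => |α j|) (fun j _ => abs_nonneg _) (Finset.mem_univ i))
    linarith [lt_of_lt_of_le hα (le_trans hrb hub)]
  have hwsum : (∑ o : Option (Fin k),
      (Option.elim o u (fun i => α i + u * β i))) = 1 := by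
    rw [Fintype.sum_option]
    simp only [Option.elim]
    rw [Finset.sum_add_distrib]
    have : ∑ i, u * β i = u * B := by rw [hB, Finset.mul_sum]
    rw [this, ← hs]
    nlinarith [hu1B]
  have hmem := (convex_convexHull ℝ (Set.range x ∪ {-(∑ i, β i • x i)})).sum_mem
    (t := (Finset.univ : Finset (Option (Fin k))))
    (w := fun o => Option.elim o u (fun i => α i + u * β i))
    (z := fun o => Option.elim o (-(∑ i, β i • x i)) x)
    (fun o _ => by cases o with
      | none => exact hu0
      | some i => exact hw i)
    hwsum
    (fun o _ => by cases o with
      | none => exact hnS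
      | some i => exact hxS i)
  convert hmem using 1
  rw [Fintype.sum_option]
  simp only [Option.elim]
  rw [smul_neg]
  have h1 : ∑ i, (α i + u * β i) • x i
      = ∑ i, α i • x i + u • ∑ i, β i • x i := by
    rw [Finset.smul_sum, ← Finset.sum_add_distrib]
    refine Finset.sum_congr rfl fun i _ => ?_
    rw [add_smul, mul_smul]
  rw [h1]
  abel
end

section
/- Let 𝒦 ⊂ ℝ^d be a convex cone with k = dim 𝒦 ≥ 1 (the dimension of its linear span). Then a point x ≠ 0 belongs to the relative interior of 𝒦 if and only if x = Σ_{i=1}^k βᵢxᵢ for some βᵢ > 0 and linearly independent vectors x₁,…,x_k ∈ 𝒦. -/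
open Set

section Aux
variable {E : Type*} [NormedAddCommGroup E] [NormedSpace ℝ E]

lemma mem_intrinsicInterior_iff_ball {s : Set E} {x : E} :
    x ∈ intrinsicInterior ℝ s ↔
      x ∈ affineSpan ℝ s ∧ ∃ ε > 0, ∀ y ∈ affineSpan ℝ s, dist y x < ε → y ∈ s := by
  rw [mem_intrinsicInterior]
  constructor
  · rintro ⟨y, hy, rfl⟩
    refine ⟨y.2, ?_⟩
    rw [mem_interior_iff_mem_nhds, Metric.mem_nhds_iff] at hy
    obtain ⟨ε, hε, hball⟩ := hy
    refine ⟨ε, hε, fun z hz hdz => ?_⟩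
    have : (⟨z, hz⟩ : affineSpan ℝ s) ∈ Metric.ball y ε := by
      simpa [Metric.mem_ball, Subtype.dist_eq] using hdz
    exact hball this
  · rintro ⟨hx, ε, hε, h⟩
    refine ⟨⟨x, hx⟩, ?_, rfl⟩
    rw [mem_interior_iff_mem_nhds, Metric.mem_nhds_iff]
    refine ⟨ε, hε, fun z hz => ?_⟩
    exact h z z.2 (by simpa [Metric.mem_ball, Subtype.dist_eq] using hz)

lemma pos_comb_mem {𝒦 : Set E} (hconv : Convex ℝ 𝒦)
    (hcone : ∀ c : ℝ, 0 < c → ∀ y ∈ 𝒦, c • y ∈ 𝒦) {n : ℕ} (hn : 0 < n)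
    (v : Fin n → E) (hv : ∀ i, v i ∈ 𝒦) (β : Fin n → ℝ) (hβ : ∀ i, 0 < β i) :
    ∑ i, β i • v i ∈ 𝒦 := by
  have : Nonempty (Fin n) := Fin.pos_iff_nonempty.mp hn
  set T := ∑ i, β i with hT
  have hTpos : 0 < T := Finset.sum_pos (fun i _ => hβ i) Finset.univ_nonempty
  have hz : ∑ i, (β i / T) • v i ∈ 𝒦 :=
    hconv.sum_mem (fun i _ => div_nonneg (hβ i).le hTpos.le)
      (by rw [← Finset.sum_div, ← hT, div_self hTpos.ne']) (fun i _ => hv i)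
  have h2 := hcone T hTpos _ hz
  rw [Finset.smul_sum] at h2
  convert h2 using 2 with i
  rw [smul_smul, mul_div_cancel₀ _ hTpos.ne']

lemma span_subset_affineSpan {𝒦 : Set E}
    (hcone : ∀ c : ℝ, 0 < c → ∀ y ∈ 𝒦, c • y ∈ 𝒦) {x₀ : E} (hx₀ : x₀ ∈ 𝒦) :
    (Submodule.span ℝ 𝒦 : Set E) ⊆ (affineSpan ℝ 𝒦 : Set E) := by
  have h2 : (2:ℝ) • x₀ ∈ 𝒦 := hcone 2 two_pos _ hx₀
  have h0 : (0:E) ∈ affineSpan ℝ 𝒦 := by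
    have := (affineSpan ℝ 𝒦).smul_vsub_vadd_mem (-1 : ℝ)
      (subset_affineSpan ℝ 𝒦 h2) (subset_affineSpan ℝ 𝒦 hx₀) (subset_affineSpan ℝ 𝒦 hx₀)
    convert this using 1
    simp [two_smul]
  intro z hz
  induction hz using Submodule.span_induction with
  | mem y hy => exact subset_affineSpan ℝ 𝒦 hy
  | zero => exact h0
  | add a b ha hb iha ihb =>
    have := (affineSpan ℝ 𝒦).smul_vsub_vadd_mem (1 : ℝ) iha h0 ihb
    simpa using this
  | smul c a ha iha =>
    have := (affineSpan ℝ 𝒦).smul_vsub_vadd_mem c iha h0 h0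
    simpa using this

end Aux


lemma exists_good_coords {E : Type*} [NormedAddCommGroup E] [NormedSpace ℝ E]
    [FiniteDimensional ℝ E] {𝒦 : Set E}
    (hcone : ∀ c : ℝ, 0 < c → ∀ y ∈ 𝒦, c • y ∈ 𝒦) {k : ℕ}
    (hk : Module.finrank ℝ (Submodule.span ℝ 𝒦) = k) (hk1 : 1 ≤ k)
    {x : E} (hxK : x ∈ 𝒦) (hx : x ≠ 0) :
    ∃ (w : Fin k → E) (ξ : Fin k → ℝ), (∀ i, w i ∈ 𝒦) ∧ LinearIndependent ℝ w ∧
      x = ∑ i, ξ i • w i ∧ ∑ i, ξ i ≠ 0 := by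
  haveI : Nonempty (Fin k) := Fin.pos_iff_nonempty.mp hk1
  set V := Submodule.span ℝ 𝒦 with hV
  obtain ⟨b, hb𝒦, hbspan, hbind⟩ := exists_linearIndependent ℝ 𝒦
  have hbfin : b.Finite := hbind.setFinite
  haveI := hbfin.fintype
  have hbcard : Fintype.card b = k := by
    rw [← hk, hV, ← hbspan, finrank_span_set_eq_card hbind, Set.toFinset_card]
  have e : Fin k ≃ b := (Fintype.equivFinOfCardEq hbcard).symm
  set w0 : Fin k → E := fun i => (e i : E) with hw0
  have hw0K : ∀ i, w0 i ∈ 𝒦 := fun i => hb𝒦 (e i).2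
  have hw0ind : LinearIndependent ℝ w0 := hbind.comp e e.injective
  -- basis of V
  have hw0V : ∀ i, w0 i ∈ V := fun i => Submodule.subset_span (hw0K i)
  set w0' : Fin k → V := fun i => ⟨w0 i, hw0V i⟩ with hw0'
  have hind' : LinearIndependent ℝ w0' :=
    LinearIndependent.of_comp V.subtype (by exact hw0ind)
  have hcard : Fintype.card (Fin k) = Module.finrank ℝ V := by rw [Fintype.card_fin, hV, hk]
  set B := basisOfLinearIndependentOfCardEqFinrank hind' hcard with hB
  have hBe : ∀ i, B i = w0' i := by
    intro i; rw [hB, coe_basisOfLinearIndependentOfCardEqFinrank]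
  set x' : V := ⟨x, Submodule.subset_span hxK⟩ with hx'
  set ξ0 : Fin k → ℝ := fun i => B.repr x' i with hξ0
  have hxsum : x = ∑ i, ξ0 i • w0 i := by
    have := B.sum_repr x'
    apply_fun (Submodule.subtype V) at this
    simpa [hBe] using this.symm
  by_cases hS : ∑ i, ξ0 i ≠ 0
  · exact ⟨w0, ξ0, hw0K, hw0ind, hxsum, hS⟩
  push_neg at hS
  have hξ0ne : ∃ j, ξ0 j ≠ 0 := by
    by_contra h
    push_neg at h
    apply hx
    rw [hxsum]
    simp only [h, zero_smul, Finset.sum_const_zero]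
  obtain ⟨j₀, hj₀⟩ := hξ0ne
  classical
  set u : Fin k → ℝˣ := fun i => if i = j₀ then (Units.mk0 (2:ℝ) two_ne_zero) else 1 with hu
  have hupos : ∀ i, (0:ℝ) < u i := by
    intro i; rw [hu]; dsimp only; split <;> norm_num
  set w : Fin k → E := fun i => (u i : ℝ) • w0 i with hw
  set ξ : Fin k → ℝ := fun i => ξ0 i / (u i : ℝ) with hξ
  refine ⟨w, ξ, ?_, ?_, ?_, ?_⟩
  · intro i; exact hcone _ (hupos i) _ (hw0K i)
  · have h2 : w = u • w0 := by
      funext i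
      simp [hw, Units.smul_def]
    rw [h2]
    exact hw0ind.units_smul u
  · rw [hxsum]
    apply Finset.sum_congr rfl
    intro i _
    rw [hξ, hw]
    dsimp only
    rw [smul_smul, div_mul_cancel₀ _ (hupos i).ne']
  · have hdiff : ∑ i, (ξ i - ξ0 i) = - (ξ0 j₀ / 2) := by
      rw [Finset.sum_eq_single j₀]
      · simp only [hξ, hu, if_pos rfl, if_true, eq_self_iff_true, Units.val_mk0]
        ring
      · intro i _ hi
        simp only [hξ, hu, if_neg hi, Units.val_one, div_one, sub_self]
      · intro h; exact absurd (Finset.mem_univ j₀) h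
    have hsum : ∑ i, ξ i = - (ξ0 j₀ / 2) := by
      have h2 := hdiff
      rw [Finset.sum_sub_distrib, hS, sub_zero] at h2
      exact h2
    rw [hsum]
    intro h
    apply hj₀
    have := neg_eq_zero.mp h
    linarith [this]


theorem mem_relint_convex_cone_iff
    {d : ℕ} (𝒦 : Set (EuclideanSpace ℝ (Fin d)))
    (hconv : Convex ℝ 𝒦)
    (hcone : ∀ (c : ℝ), 0 < c → ∀ y ∈ 𝒦, c • y ∈ 𝒦)
    (k : ℕ) (hk : Module.finrank ℝ (Submodule.span ℝ 𝒦) = k) (hk1 : 1 ≤ k)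
    (x : EuclideanSpace ℝ (Fin d)) (hx : x ≠ 0) :
    x ∈ intrinsicInterior ℝ 𝒦 ↔
      ∃ (v : Fin k → EuclideanSpace ℝ (Fin d)) (β : Fin k → ℝ),
        LinearIndependent ℝ v ∧ (∀ i, v i ∈ 𝒦) ∧ (∀ i, 0 < β i) ∧
        x = ∑ i, β i • v i := by
  set V := Submodule.span ℝ 𝒦 with hV
  have hk0 : 0 < k := hk1
  haveI : Nonempty (Fin k) := Fin.pos_iff_nonempty.mp hk0
  have hAV : ∀ z ∈ affineSpan ℝ 𝒦, z ∈ V := by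
    intro z hz
    have hle : affineSpan ℝ 𝒦 ≤ V.toAffineSubspace :=
      affineSpan_le.mpr (fun w hw => Submodule.subset_span hw)
    exact (Submodule.mem_toAffineSubspace).mp (hle hz)
  constructor
  · intro hmem
    have hxK : x ∈ 𝒦 := intrinsicInterior_subset hmem
    rw [mem_intrinsicInterior_iff_ball] at hmem
    obtain ⟨hxA, δ, hδ, hball⟩ := hmem
    obtain ⟨w, ξ, hwK, hwind, hxw, hS⟩ := exists_good_coords hcone hk hk1 hxK hx
    have hkR : (0:ℝ) < (k:ℝ) := by exact_mod_cast hk0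
    set s := ∑ j, w j with hs
    set N : Fin k → ℝ := fun i => ‖(k:ℝ) • w i - s‖ with hN
    set C : ℝ := (∑ i, N i) + 1 with hC
    have hCpos : 0 < C := by
      have : 0 ≤ ∑ i, N i := Finset.sum_nonneg fun i _ => norm_nonneg _
      linarith
    have hNC : ∀ i, N i ≤ C := by
      intro i
      have h1 : N i ≤ ∑ j, N j :=
        Finset.single_le_sum (fun j _ => norm_nonneg ((k:ℝ) • w j - s)) (Finset.mem_univ i)
      linarith
    set ε : ℝ := δ / (2 * C) with hε
    have hεpos : 0 < ε := by positivity
    have hxV : x ∈ V := Submodule.subset_span hxK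
    have hwV : ∀ j, w j ∈ V := fun j => Submodule.subset_span (hwK j)
    have hmemK : ∀ i, x + ε • ((k:ℝ) • w i - s) ∈ 𝒦 := by
      intro i
      apply hball
      · apply span_subset_affineSpan hcone hxK
        exact Submodule.add_mem _ hxV (Submodule.smul_mem _ _ (Submodule.sub_mem _
          (Submodule.smul_mem _ _ (hwV i)) (Submodule.sum_mem _ fun j _ => hwV j)))
      · rw [dist_eq_norm, add_sub_cancel_left, norm_smul, Real.norm_eq_abs, abs_of_pos hεpos]
        have h0 : ‖(k:ℝ) • w i - s‖ = N i := rfl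
        have h1 : ε * N i ≤ ε * C := mul_le_mul_of_nonneg_left (hNC i) hεpos.le
        have h2 : ε * C = δ / 2 := by
          rw [hε]; field_simp
        rw [h0]
        calc ε * N i ≤ ε * C := h1
          _ = δ / 2 := h2
          _ < δ := by linarith
    set v : Fin k → EuclideanSpace ℝ (Fin d) :=
      fun i => ((k:ℝ)⁻¹) • (x + ε • ((k:ℝ) • w i - s)) with hv
    set a : EuclideanSpace ℝ (Fin d) := (k:ℝ)⁻¹ • x - (ε/(k:ℝ)) • s with ha
    have hva : ∀ i, v i = a + ε • w i := by
      intro i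
      rw [hv, ha]
      dsimp only
      match_scalars <;> field_simp
    have haw : a = ∑ j, ((ξ j - ε)/(k:ℝ)) • w j := by
      rw [ha, hxw, hs, Finset.smul_sum, Finset.smul_sum, ← Finset.sum_sub_distrib]
      apply Finset.sum_congr rfl
      intro j _
      rw [smul_smul, ← sub_smul]
      congr 1
      ring
    have hvK : ∀ i, v i ∈ 𝒦 := fun i => hcone _ (inv_pos.mpr hkR) _ (hmemK i)
    have hsumv : ∑ i, v i = x := by
      have h1 : ∑ i, v i = ∑ i : Fin k, (a + ε • w i) :=
        Finset.sum_congr rfl fun i _ => hva i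
      rw [h1, Finset.sum_add_distrib, Finset.sum_const, Finset.card_univ, Fintype.card_fin,
        ← Finset.smul_sum, ← hs, ← Nat.cast_smul_eq_nsmul ℝ, ha]
      match_scalars <;> field_simp <;> ring
    have hindep : LinearIndependent ℝ v := by
      rw [Fintype.linearIndependent_iff]
      intro g hg
      set Cg := ∑ i, g i with hCg
      have key : ∑ j, (Cg * ((ξ j - ε)/(k:ℝ)) + ε * g j) • w j = 0 := by
        have e1 : ∑ j, (Cg * ((ξ j - ε)/(k:ℝ)) + ε * g j) • w j
            = Cg • a + ∑ j, g j • (ε • w j) := by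
          rw [haw, Finset.smul_sum, ← Finset.sum_add_distrib]
          apply Finset.sum_congr rfl
          intro j _
          rw [add_smul, smul_smul, smul_smul, mul_comm (g j) ε]
        have e2 : Cg • a + ∑ j, g j • (ε • w j) = ∑ j, g j • v j := by
          rw [hCg, Finset.sum_smul, ← Finset.sum_add_distrib]
          apply Finset.sum_congr rfl
          intro j _
          rw [hva j, smul_add]
        rw [e1, e2, hg]
      have hcoef := Fintype.linearIndependent_iff.mp hwind _ key
      have hCg0 : Cg = 0 := by
        have hsum0 : ∑ j, (Cg * ((ξ j - ε)/(k:ℝ)) + ε * g j) = 0 :=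
          Finset.sum_eq_zero fun j _ => hcoef j
        have h2 : ∑ j, ((ξ j - ε)/(k:ℝ)) = (∑ j, ξ j)/(k:ℝ) - ε := by
          rw [← Finset.sum_div, Finset.sum_sub_distrib, Finset.sum_const, Finset.card_univ,
            Fintype.card_fin, sub_div, nsmul_eq_mul]
          congr 1
          field_simp
        have h3 : ∑ j, (Cg * ((ξ j - ε)/(k:ℝ)) + ε * g j)
            = Cg * ((∑ j, ξ j)/(k:ℝ)) := by
          rw [Finset.sum_add_distrib, ← Finset.mul_sum, ← Finset.mul_sum, ← hCg, h2]
          ring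
        rw [h3] at hsum0
        rcases mul_eq_zero.mp hsum0 with h | h
        · exact h
        · exact absurd (by field_simp at h; simpa using h) hS
      intro i
      have := hcoef i
      rw [hCg0, zero_mul, zero_add] at this
      rcases mul_eq_zero.mp this with h | h
      · exact absurd h hεpos.ne'
      · exact h
    refine ⟨v, fun _ => 1, hindep, hvK, fun _ => one_pos, ?_⟩
    simp only [one_smul]
    exact hsumv.symm
  · rintro ⟨v, β, hind, hvK, hβ, hxe⟩
    have hxK : x ∈ 𝒦 := by rw [hxe]; exact pos_comb_mem hconv hcone hk0 v hvK β hβ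
    have hvV : ∀ i, v i ∈ V := fun i => Submodule.subset_span (hvK i)
    set v' : Fin k → V := fun i => ⟨v i, hvV i⟩ with hv'
    have hind' : LinearIndependent ℝ v' :=
      LinearIndependent.of_comp V.subtype (by exact hind)
    have hcard : Fintype.card (Fin k) = Module.finrank ℝ V := by rw [Fintype.card_fin, hV, hk]
    set B := basisOfLinearIndependentOfCardEqFinrank hind' hcard with hB
    have hBe : ∀ i, B i = v' i := by
      intro i; rw [hB, coe_basisOfLinearIndependentOfCardEqFinrank]
    set x' : V := ⟨x, Submodule.subset_span hxK⟩ with hx'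
    have hxsum : x' = ∑ i, β i • B i := by
      apply Subtype.ext
      simp only [AddSubmonoidClass.coe_finset_sum, hBe, SetLike.val_smul]
      exact hxe
    have hreprx : ∀ i, B.repr x' i = β i := by
      intro i; rw [hxsum, B.repr_sum_self]
    have hcont : ∀ i, Continuous (fun y : V => B.repr y i) := fun i =>
      LinearMap.continuous_of_finiteDimensional
        ((Finsupp.lapply i).comp B.repr.toLinearMap)
    have hUopen : IsOpen {y : V | ∀ i, 0 < B.repr y i} := by
      have : {y : V | ∀ i, 0 < B.repr y i} = ⋂ i, (fun y : V => B.repr y i) ⁻¹' Ioi 0 := by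
        ext; simp
      rw [this]
      exact isOpen_iInter_of_finite fun i => isOpen_Ioi.preimage (hcont i)
    have hxU : x' ∈ {y : V | ∀ i, 0 < B.repr y i} := fun i => by
      rw [hreprx i]; exact hβ i
    obtain ⟨ε, hε, hball⟩ := Metric.isOpen_iff.mp hUopen x' hxU
    rw [mem_intrinsicInterior_iff_ball]
    refine ⟨subset_affineSpan ℝ 𝒦 hxK, ε, hε, fun y hyA hyd => ?_⟩
    set y' : V := ⟨y, hAV y hyA⟩ with hy'
    have hy'U : y' ∈ {y : V | ∀ i, 0 < B.repr y i} := by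
      apply hball
      simpa [Metric.mem_ball, Subtype.dist_eq] using hyd
    have hysum : y = ∑ i, (B.repr y' i) • v i := by
      have := B.sum_repr y'
      apply_fun (Submodule.subtype V) at this
      simpa [hBe] using this.symm
    rw [hysum]
    exact pos_comb_mem hconv hcone hk0 v hvK _ (fun i => hy'U i)
end
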